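/- arXiv:2107.01368 — 7 statements merged into one kernel-verified Lean document; each statement's English description precedes it below -/
import Mathlib

section
/- Let d ∈ ℕⁿ and let P be an A-submodule of Aᵏ. Then every associated prime of the A_d-module A_dᵏ/P^c is the contraction of an associated prime of the A-module Aᵏ/P: for every q ∈ associatedPrimes A_d (A_dᵏ/P^c) there exists p ∈ associatedPrimes A (Aᵏ/P) such that q equals the preimage of p under the inclusion A_d → A. -/
open scoped BigOperators

set_option synthInstance.maxHeartbeats 1000000
set_option maxHeartbeats 1000000

/-- The ring of Laurent polynomials in `n` variables over `F`:
the group algebra of the lattice `ℤⁿ`. -/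
abbrev LaurentAlg (F : Type*) [Field F] (n : ℕ) : Type _ :=
  AddMonoidAlgebra F (Fin n → ℤ)

/-- The monomial `σ^x`. -/
noncomputable def mono (F : Type*) [Field F] {n : ℕ} (x : Fin n → ℤ) : LaurentAlg F n :=
  AddMonoidAlgebra.single x 1

/-- `A_S`: the `F`-subalgebra of `A` spanned (generated) by the monomials `σ^x`, `x ∈ S`. -/
noncomputable def monoAlg (F : Type*) [Field F] {n : ℕ} (S : AddSubgroup (Fin n → ℤ)) :
    Subalgebra F (LaurentAlg F n) :=
  Algebra.adjoin F {a : LaurentAlg F n | ∃ x ∈ S, a = mono F x}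

/-- The diagonal sublattice `L_d = {x : dᵢ ∣ xᵢ for all i}`. -/
def diagLattice (n : ℕ) (d : Fin n → ℕ) : AddSubgroup (Fin n → ℤ) where
  carrier := {x | ∀ i, (d i : ℤ) ∣ x i}
  zero_mem' := fun i => dvd_zero _
  add_mem' := fun hx hy i => dvd_add (hx i) (hy i)
  neg_mem' := fun hx i => dvd_neg.mpr (hx i)

/-- The coordinatewise inclusion `ι : Bᵏ → Aᵏ` for a subalgebra `B ⊆ A`,
as a `B`-linear map. -/
noncomputable def inclMap {F : Type*} [Field F] {n : ℕ} (B : Subalgebra F (LaurentAlg F n))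
    (k : ℕ) : (Fin k → B) →ₗ[B] (Fin k → LaurentAlg F n) :=
  LinearMap.pi fun i => (Algebra.linearMap B (LaurentAlg F n)).comp (LinearMap.proj i)

/-- The contraction `P^c = P ∩ Bᵏ` of an `A`-submodule `P ⊆ Aᵏ`. -/
noncomputable def contrTo {F : Type*} [Field F] {n : ℕ} (B : Subalgebra F (LaurentAlg F n))
    {k : ℕ} (P : Submodule (LaurentAlg F n) (Fin k → LaurentAlg F n)) :
    Submodule B (Fin k → B) :=
  Submodule.comap (inclMap B k) (Submodule.restrictScalars B P)

/-- The extension `Q^e ⊆ Aᵏ` of a `B`-submodule `Q ⊆ Bᵏ`: the `A`-submodule generated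
by `ι(Q)`. -/
noncomputable def extendTo {F : Type*} [Field F] {n : ℕ} (B : Subalgebra F (LaurentAlg F n))
    {k : ℕ} (Q : Submodule B (Fin k → B)) :
    Submodule (LaurentAlg F n) (Fin k → LaurentAlg F n) :=
  Submodule.span (LaurentAlg F n) (inclMap B k '' Q)

/-- Auxiliary general lemma: if `A` is a Noetherian `B`-algebra and `M` is an `A`-module
(compatibly a `B`-module), then every associated prime of `M` over `B` is the contraction
of an associated prime of `M` over `A`. -/
theorem exists_comap_of_isAssociatedPrime
    {B A : Type*} [CommRing B] [CommRing A] [Algebra B A] [IsNoetherianRing A]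
    {M : Type*} [AddCommGroup M] [Module A M] [Module B M] [IsScalarTower B A M]
    {q : Ideal B} (hq : IsAssociatedPrime q M) :
    ∃ p ∈ associatedPrimes A M, q = p.comap (algebraMap B A) := by
  obtain ⟨hqp, m, hm⟩ := hq
  have hmem : ∀ b : B, b ∈ q ↔ ∃ j : ℕ, b ^ j • m = 0 := fun b => by
    rw [hm, Ideal.mem_radical_iff]
    simp only [Submodule.mem_colon_singleton, Submodule.mem_bot]
  -- "good x" : x is not torsion for the multiplicative set `B \ q`.
  have key :
      ∃ I ∈ {I : Ideal A | ∃ x : M, (∀ s : B, s ∉ q → s • x ≠ 0) ∧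
        (∃ a : A, x = a • m) ∧ I = (A ∙ x).annihilator},
        ∀ I' ∈ {I : Ideal A | ∃ x : M, (∀ s : B, s ∉ q → s • x ≠ 0) ∧
        (∃ a : A, x = a • m) ∧ I = (A ∙ x).annihilator}, ¬ I < I' :=
    set_has_maximal_iff_noetherian.mpr ‹IsNoetherianRing A› _
      ⟨(A ∙ m).annihilator, m, fun s hs h => hs ((hmem s).mpr ⟨1, by rwa [pow_one]⟩),
        ⟨1, (one_smul _ _).symm⟩, rfl⟩
  obtain ⟨I, ⟨x₀, hx₀good, ⟨a₀, ha₀⟩, hI⟩, hmax⟩ := key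
  have hImem : ∀ z : A, z ∈ I ↔ z • x₀ = 0 := fun z => by
    rw [hI, Submodule.mem_annihilator_span_singleton]
  -- basic commutation of the two actions
  have hcomm : ∀ (s : B) (z : A) (y : M), z • s • y = s • z • y := by
    intro s z y
    rw [← algebraMap_smul A s y, ← algebraMap_smul A s (z • y), smul_smul, smul_smul,
      mul_comm]
  have hx₀ne : x₀ ≠ 0 := by
    intro h
    exact hx₀good 1 (fun h1 => hqp.ne_top (q.eq_top_of_isUnit_mem h1 isUnit_one))
      (by rw [h, smul_zero])
  -- main step: if `z • x₀ ≠ 0` then `z • x₀` is also good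
  have hkey : ∀ z : A, z • x₀ ≠ 0 → ∀ s : B, s ∉ q → s • z • x₀ ≠ 0 := by
    intro z hz
    by_contra h
    push_neg at h
    obtain ⟨s, hs, hsz⟩ := h
    -- `s • x₀` gives a strictly bigger annihilator in the family
    have hgood : ∀ t : B, t ∉ q → t • s • x₀ ≠ 0 := by
      intro t ht h0
      rw [smul_smul] at h0
      exact hx₀good (t * s) (fun hmem' => ((hqp.mem_or_mem hmem').elim ht hs)) h0
    have hmemI : I ≤ (A ∙ (s • x₀)).annihilator := by
      intro w hw
      rw [Submodule.mem_annihilator_span_singleton, hcomm, (hImem w).mp hw, smul_zero]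
    have hzmem : z ∈ (A ∙ (s • x₀)).annihilator := by
      rw [Submodule.mem_annihilator_span_singleton, hcomm, hsz]
    have hzI : z ∉ I := fun hzI => hz ((hImem z).mp hzI)
    refine hmax ((A ∙ (s • x₀)).annihilator)
      ⟨s • x₀, hgood, ⟨algebraMap B A s * a₀, by
        rw [mul_smul, algebraMap_smul, ha₀]⟩, rfl⟩ (lt_of_le_of_ne hmemI ?_)
    intro hEq
    exact hzI (hEq ▸ hzmem)
  -- `I` is prime
  have hprime : I.IsPrime := by
    constructor
    · intro h
      exact hx₀ne (by simpa using (hImem 1).mp (h ▸ Submodule.mem_top))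
    · intro z y hzy
      by_cases hz : z ∈ I
      · exact Or.inl hz
      · right
        have hzx : z • x₀ ≠ 0 := fun h => hz ((hImem z).mpr h)
        have hJ : (A ∙ (z • x₀)).annihilator ∈
            {I : Ideal A | ∃ x : M, (∀ s : B, s ∉ q → s • x ≠ 0) ∧
              (∃ a : A, x = a • m) ∧ I = (A ∙ x).annihilator} :=
          ⟨z • x₀, hkey z hzx, ⟨z * a₀, by rw [mul_smul, ha₀]⟩, rfl⟩
        have hle : I ≤ (A ∙ (z • x₀)).annihilator := by
          intro w hw
          rw [Submodule.mem_annihilator_span_singleton, smul_smul, mul_comm, ← smul_smul,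
            (hImem w).mp hw, smul_zero]
        have hEq : I = (A ∙ (z • x₀)).annihilator := by
          by_contra hne
          exact hmax _ hJ (lt_of_le_of_ne hle hne)
        have hy : y ∈ (A ∙ (z • x₀)).annihilator := by
          rw [Submodule.mem_annihilator_span_singleton, smul_smul, mul_comm]
          exact (hImem _).mp hzy
        rwa [← hEq] at hy
  refine ⟨I, ⟨hprime, x₀, ?_⟩, ?_⟩
  · have hIc : I = (⊥ : Submodule A M).colon {x₀} := by
      ext z
      rw [hImem, Submodule.mem_colon_singleton, Submodule.mem_bot]
    rw [← hIc, hprime.radical]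
  ext b
  rw [Ideal.mem_comap, hImem, algebraMap_smul]
  constructor
  · intro hb
    obtain ⟨j, hj⟩ := (hmem b).mp hb
    have hpow : (algebraMap B A b) ^ j ∈ I := by
      rw [hImem, ← map_pow, algebraMap_smul, ha₀, ← hcomm, hj, smul_zero]
    have h1 := hprime.mem_of_pow_mem j hpow
    rwa [hImem, algebraMap_smul] at h1
  · intro hb
    by_contra hbq
    exact hx₀good b hbq hb

instance (n : ℕ) : AddMonoid.FG (Fin n → ℤ) :=
  AddGroup.fg_iff_addMonoid_fg.mp (Module.Finite.iff_addGroup_fg.mp inferInstance)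

instance (F : Type*) [Field F] (n : ℕ) : IsNoetherianRing (LaurentAlg F n) :=
  Algebra.FiniteType.isNoetherianRing F (LaurentAlg F n)

theorem contr_aux {F : Type*} [Field F] {n k : ℕ} (B : Subalgebra F (LaurentAlg F n))
    (P : Submodule (LaurentAlg F n) (Fin k → LaurentAlg F n)) :
    ∀ q ∈ associatedPrimes B ((Fin k → B) ⧸ contrTo B P),
      ∃ p ∈ associatedPrimes (LaurentAlg F n) ((Fin k → LaurentAlg F n) ⧸ P),
        q = p.comap (algebraMap B (LaurentAlg F n)) := by
  intro q hq
  let g : (Fin k → B) →ₗ[B] ((Fin k → LaurentAlg F n) ⧸ P) :=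
    (P.mkQ.restrictScalars B).comp (inclMap B k)
  have hker : LinearMap.ker g = contrTo B P := by
    rw [LinearMap.ker_comp, LinearMap.ker_restrictScalars, Submodule.ker_mkQ]
    rfl
  let φ := Submodule.liftQ (contrTo B P) g hker.ge
  have hφ : Function.Injective φ := by
    rw [← LinearMap.ker_eq_bot]
    exact Submodule.ker_liftQ_eq_bot _ _ _ hker.le
  have hq' : IsAssociatedPrime q ((Fin k → LaurentAlg F n) ⧸ P) :=
    IsAssociatedPrime.map_of_injective (f := φ) hq hφ
  exact exists_comap_of_isAssociatedPrime hq'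

/-- Every associated prime of `A_dᵏ/P^c` is the contraction of an
associated prime of `Aᵏ/P`. -/
theorem associatedPrimes_contraction
    {F : Type*} [Field F] {n k : ℕ} (hn : 0 < n) (hk : 1 ≤ k)
    (d : Fin n → ℕ)
    (P : Submodule (LaurentAlg F n) (Fin k → LaurentAlg F n)) :
    ∀ q ∈ associatedPrimes (monoAlg F (diagLattice n d))
        ((Fin k → monoAlg F (diagLattice n d)) ⧸ contrTo (monoAlg F (diagLattice n d)) P),
      ∃ p ∈ associatedPrimes (LaurentAlg F n) ((Fin k → LaurentAlg F n) ⧸ P),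
        q = p.comap (algebraMap (monoAlg F (diagLattice n d)) (LaurentAlg F n)) :=
  contr_aux (monoAlg F (diagLattice n d)) P
end

section
/- Let d ∈ ℕⁿ and let P be an A-submodule of Aᵏ. (i) If Aᵏ/P is a torsion-free A-module (a•m = 0 with a ∈ A nonzero and m ∈ Aᵏ/P implies m = 0), then A_dᵏ/P^c is a torsion-free A_d-module. (ii) If moreover every dᵢ ≥ 1 (so L_d has full rank) and Aᵏ/P is a torsion A-module (every element is annihilated by some nonzero element of A), then A_dᵏ/P^c is a torsion A_d-module. -/
open scoped BigOperators

set_option synthInstance.maxHeartbeats 1000000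
set_option maxHeartbeats 1000000

section Aux

variable {F : Type*} [Field F] {n : ℕ}

noncomputable instance : IsDomain (LaurentAlg F n) := NoZeroDivisors.to_isDomain _

lemma mono_mem {d : Fin n → ℕ} {x : Fin n → ℤ} (hx : x ∈ diagLattice n d) :
    mono F x ∈ monoAlg F (diagLattice n d) :=
  Algebra.subset_adjoin ⟨x, hx, rfl⟩

lemma isIntegral_mono (d : Fin n → ℕ) (hd : ∀ i, 1 ≤ d i) (x : Fin n → ℤ) :
    IsIntegral (monoAlg F (diagLattice n d)) (mono F x) := by
  set N : ℕ := ∏ i, d i with hN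
  have hN0 : N ≠ 0 := Finset.prod_ne_zero_iff.mpr fun i _ => Nat.one_le_iff_ne_zero.mp (hd i)
  have hmem : N • x ∈ diagLattice n d := by
    intro i
    have : (d i : ℤ) ∣ (N : ℤ) :=
      Int.natCast_dvd_natCast.mpr (Finset.dvd_prod_of_mem d (Finset.mem_univ i))
    simpa using this.mul_right (x i)
  refine ⟨Polynomial.X ^ N - Polynomial.C ⟨mono F (N • x), mono_mem hmem⟩,
    Polynomial.monic_X_pow_sub_C _ hN0, ?_⟩
  rw [← Polynomial.aeval_def]
  simp only [map_sub, map_pow, Polynomial.aeval_X, Polynomial.aeval_C]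
  have h1 : mono F x ^ N = mono F (N • x) := by
    simp [mono, AddMonoidAlgebra.single_pow]
  have h2 : (algebraMap (monoAlg F (diagLattice n d)) (LaurentAlg F n))
      ⟨mono F (N • x), mono_mem hmem⟩ = mono F (N • x) := rfl
  rw [h1, h2, sub_self]

lemma isIntegral_all (d : Fin n → ℕ) (hd : ∀ i, 1 ≤ d i) (a : LaurentAlg F n) :
    IsIntegral (monoAlg F (diagLattice n d)) a := by
  induction a using AddMonoidAlgebra.induction with
  | zero => exact isIntegral_zero
  | single_add x c f hxf hc ih =>
      refine IsIntegral.add ?_ ih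
      have h1 : (AddMonoidAlgebra.single x c : LaurentAlg F n)
          = algebraMap F (LaurentAlg F n) c * mono F x := by
        rw [AddMonoidAlgebra.coe_algebraMap]
        show _ = AddMonoidAlgebra.single 0 c * AddMonoidAlgebra.single x 1
        rw [AddMonoidAlgebra.single_mul_single, zero_add, mul_one]
      rw [h1]
      have h2 : IsIntegral (monoAlg F (diagLattice n d)) (algebraMap F (LaurentAlg F n) c) :=
        isIntegral_algebraMap (x := (⟨algebraMap F (LaurentAlg F n) c,
          Subalgebra.algebraMap_mem _ c⟩ : monoAlg F (diagLattice n d)))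
      exact h2.mul (isIntegral_mono d hd x)

lemma exists_dvd_mem (d : Fin n → ℕ) (hd : ∀ i, 1 ≤ d i) {a : LaurentAlg F n} (ha : a ≠ 0) :
    ∃ b : monoAlg F (diagLattice n d), b ≠ 0 ∧ a ∣ (b : LaurentAlg F n) := by
  have hI := Ideal.comap_ne_bot_of_integral_mem (I := Ideal.span {a}) ha
    (Ideal.mem_span_singleton_self a) (isIntegral_all d hd a)
  obtain ⟨b, hbI, hb0⟩ := Submodule.exists_mem_ne_zero_of_ne_bot hI
  exact ⟨b, hb0, Ideal.mem_span_singleton.mp hbI⟩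

lemma smul_incl {k : ℕ} (B : Subalgebra F (LaurentAlg F n))
    (b : B) (w : Fin k → LaurentAlg F n) : b • w = (b : LaurentAlg F n) • w := by
  funext i
  simp [Pi.smul_apply, Subalgebra.smul_def]

end Aux

/-- (i) If `Aᵏ/P` is torsion free then so is `A_dᵏ/P^c`.
(ii) If moreover every `dᵢ ≥ 1` and `Aᵏ/P` is torsion, then `A_dᵏ/P^c` is torsion. -/
theorem torsionFree_and_torsion_of_contraction
    {F : Type*} [Field F] {n k : ℕ} (hn : 0 < n) (hk : 1 ≤ k)
    (d : Fin n → ℕ)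
    (P : Submodule (LaurentAlg F n) (Fin k → LaurentAlg F n)) :
    ((∀ (a : LaurentAlg F n) (m : (Fin k → LaurentAlg F n) ⧸ P),
        a ≠ 0 → a • m = 0 → m = 0) →
      ∀ (a : monoAlg F (diagLattice n d))
        (m : (Fin k → monoAlg F (diagLattice n d)) ⧸ contrTo (monoAlg F (diagLattice n d)) P),
        a ≠ 0 → a • m = 0 → m = 0) ∧
    ((∀ i, 1 ≤ d i) →
      (∀ m : (Fin k → LaurentAlg F n) ⧸ P, ∃ a : LaurentAlg F n, a ≠ 0 ∧ a • m = 0) →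
      ∀ m : (Fin k → monoAlg F (diagLattice n d)) ⧸ contrTo (monoAlg F (diagLattice n d)) P,
        ∃ a : monoAlg F (diagLattice n d), a ≠ 0 ∧ a • m = 0) := by
  set B := monoAlg F (diagLattice n d) with hB
  constructor
  · intro hTF a m ha ham
    obtain ⟨v, rfl⟩ := Submodule.Quotient.mk_surjective _ m
    rw [← Submodule.Quotient.mk_smul, Submodule.Quotient.mk_eq_zero] at ham
    rw [Submodule.Quotient.mk_eq_zero]
    have h1 : (a : LaurentAlg F n) • inclMap B k v ∈ P := by
      have := ham
      rw [contrTo, Submodule.mem_comap, map_smul, Submodule.restrictScalars_mem,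
        smul_incl] at this
      exact this
    have ha' : (a : LaurentAlg F n) ≠ 0 := fun h => ha (Subtype.ext h)
    have h2 := hTF (a : LaurentAlg F n) (Submodule.Quotient.mk (inclMap B k v)) ha'
      (by rw [← Submodule.Quotient.mk_smul, Submodule.Quotient.mk_eq_zero]; exact h1)
    rw [Submodule.Quotient.mk_eq_zero] at h2
    exact h2
  · intro hd hTor m
    obtain ⟨v, rfl⟩ := Submodule.Quotient.mk_surjective _ m
    obtain ⟨a, ha, hav⟩ := hTor (Submodule.Quotient.mk (inclMap B k v))
    rw [← Submodule.Quotient.mk_smul, Submodule.Quotient.mk_eq_zero] at hav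
    obtain ⟨b, hb0, c, hc⟩ := exists_dvd_mem d hd ha
    refine ⟨b, hb0, ?_⟩
    rw [← Submodule.Quotient.mk_smul, Submodule.Quotient.mk_eq_zero]
    rw [contrTo, Submodule.mem_comap, map_smul, Submodule.restrictScalars_mem, smul_incl]
    rw [hc, mul_comm, mul_smul]
    exact P.smul_mem c hav
end

section
/- Let d ∈ ℕⁿ and let Q be an A_d-submodule of A_dᵏ, with extension Q^e to Aᵏ. Then the quotient Aᵏ/Q^e, regarded as an A_d-module by restriction of scalars along the inclusion A_d ⊆ A, is isomorphic to the direct sum of copies of A_dᵏ/Q indexed by the cosets of L_d in ℤⁿ: there is an A_d-linear isomorphism Aᵏ/Q^e ≅ ⊕_{c ∈ ℤⁿ/L_d} (A_dᵏ/Q). (This is the algebraic form of the statement that the extended system is a direct product of copies of the original system, one for each translate of the sublattice.) -/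
open scoped BigOperators

set_option synthInstance.maxHeartbeats 1000000
set_option maxHeartbeats 1000000

open DirectSum

namespace ExtAux

variable {F : Type*} [Field F] {n : ℕ} (d : Fin n → ℕ)

lemma mem_diag {z : Fin n → ℤ} : z ∈ diagLattice n d ↔ ∀ i, (d i : ℤ) ∣ z i := Iff.rfl

/-- representative of a coset -/
noncomputable def rep (c : (Fin n → ℤ) ⧸ diagLattice n d) : Fin n → ℤ := Quotient.out c

lemma mk_rep (c : (Fin n → ℤ) ⧸ diagLattice n d) :
    QuotientAddGroup.mk (rep d c) = c := QuotientAddGroup.out_eq' c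

lemma rep_zero_mem : rep d 0 ∈ diagLattice n d := by
  have := mk_rep d 0
  rwa [QuotientAddGroup.eq_zero_iff] at this

/-- membership in `monoAlg` is equivalent to support condition -/
lemma support_subset_of_mem {f : LaurentAlg F n} (hf : f ∈ monoAlg F (diagLattice n d)) :
    ∀ z ∈ f.coeff.support, z ∈ diagLattice n d := by
  classical
  let S : Subalgebra F (LaurentAlg F n) :=
    { carrier := {f : LaurentAlg F n | ∀ z ∈ f.coeff.support, z ∈ diagLattice n d}
      mul_mem' := by
        intro a b ha hb z hz
        have := AddMonoidAlgebra.support_coeff_mul_subset a b hz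
        rw [Finset.mem_add] at this
        obtain ⟨x, hx, y, hy, rfl⟩ := this
        exact add_mem (ha x hx) (hb y hy)
      add_mem' := by
        intro a b ha hb z hz
        have := Finsupp.support_add (g₁ := a.coeff) (g₂ := b.coeff) hz
        rw [Finset.mem_union] at this
        rcases this with h | h
        · exact ha z h
        · exact hb z h
      algebraMap_mem' := by
        intro r z hz
        have : (algebraMap F (LaurentAlg F n) r) = AddMonoidAlgebra.single 0 r := rfl
        rw [this] at hz
        have := Finsupp.support_single_subset hz
        simp only [Finset.mem_singleton] at this
        subst this
        exact zero_mem _ }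
  have hle : monoAlg F (diagLattice n d) ≤ S := by
    apply Algebra.adjoin_le
    rintro a ⟨x, hx, rfl⟩ z hz
    have := Finsupp.support_single_subset hz
    simp only [Finset.mem_singleton] at this
    subst this; exact hx
  exact hle hf

lemma mem_span_monos {f : LaurentAlg F n} (hf : ∀ z ∈ f.coeff.support, z ∈ diagLattice n d) :
    f ∈ Submodule.span F {a : LaurentAlg F n | ∃ x ∈ diagLattice n d, a = mono F x} := by
  have hrepr : f = ∑ x ∈ f.coeff.support, (f.coeff x) • (mono F x) := by
    conv_lhs => rw [← AddMonoidAlgebra.sum_coeff_single f]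
    rw [Finsupp.sum]
    refine Finset.sum_congr rfl fun x _ => ?_
    rw [mono, AddMonoidAlgebra.smul_single', mul_one]
  rw [hrepr]
  refine Submodule.sum_mem _ fun x hx => Submodule.smul_mem _ _ ?_
  exact Submodule.subset_span ⟨x, hf x hx, rfl⟩

lemma mem_monoAlg_of_support {f : LaurentAlg F n}
    (hf : ∀ z ∈ f.coeff.support, z ∈ diagLattice n d) : f ∈ monoAlg F (diagLattice n d) := by
  have h := mem_span_monos d hf
  have hle : Submodule.span F {a : LaurentAlg F n | ∃ x ∈ diagLattice n d, a = mono F x}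
      ≤ Subalgebra.toSubmodule (monoAlg F (diagLattice n d)) := by
    rw [Submodule.span_le]
    rintro a ⟨x, hx, rfl⟩
    exact Algebra.subset_adjoin ⟨x, hx, rfl⟩
  exact hle h


/-- decidability of lattice membership -/
instance diagDec : DecidablePred (· ∈ diagLattice n d) := fun z =>
  decidable_of_iff (∀ i, (d i : ℤ) ∣ z i) Iff.rfl

/-- The coset-projection: restrict `f` to the coset `c` and translate back by `rep c`. -/
noncomputable def proj (c : (Fin n → ℤ) ⧸ diagLattice n d) (f : LaurentAlg F n) :
    LaurentAlg F n :=
  AddMonoidAlgebra.ofCoeff <| Finsupp.onFinset (f.coeff.support.image (· - rep d c))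
    (fun z => if z ∈ diagLattice n d then f.coeff (z + rep d c) else 0)
    (fun z hz => by
      have hz' : (if z ∈ diagLattice n d then f.coeff (z + rep d c) else 0) ≠ 0 := hz
      split_ifs at hz' with h
      · exact Finset.mem_image.2 ⟨z + rep d c, Finsupp.mem_support_iff.2 hz',
          add_sub_cancel_right z (rep d c)⟩
      · exact absurd rfl hz')

lemma proj_apply_mem {c : (Fin n → ℤ) ⧸ diagLattice n d} {z : Fin n → ℤ}
    (hz : z ∈ diagLattice n d) (f : LaurentAlg F n) :
    (proj d c f).coeff z = f.coeff (z + rep d c) := by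
  simp only [proj, AddMonoidAlgebra.coeff_ofCoeff, Finsupp.onFinset_apply, if_pos hz]

lemma proj_apply_not {c : (Fin n → ℤ) ⧸ diagLattice n d} {z : Fin n → ℤ}
    (hz : z ∉ diagLattice n d) (f : LaurentAlg F n) :
    (proj d c f).coeff z = 0 := by
  simp only [proj, AddMonoidAlgebra.coeff_ofCoeff, Finsupp.onFinset_apply, if_neg hz]

lemma proj_mem (c : (Fin n → ℤ) ⧸ diagLattice n d) (f : LaurentAlg F n) :
    proj d c f ∈ monoAlg F (diagLattice n d) := by
  refine mem_monoAlg_of_support d fun z hz => ?_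
  by_contra h
  rw [Finsupp.mem_support_iff, proj_apply_not d h] at hz
  exact hz rfl

lemma proj_add (c : (Fin n → ℤ) ⧸ diagLattice n d) (f g : LaurentAlg F n) :
    proj d c (f + g) = proj d c f + proj d c g := by
  ext z
  have hadd : ∀ (a b : LaurentAlg F n) (w : Fin n → ℤ), (a + b).coeff w = a.coeff w + b.coeff w :=
    fun a b w => Finsupp.add_apply a.coeff b.coeff w
  by_cases h : z ∈ diagLattice n d
  · rw [hadd, proj_apply_mem d h, proj_apply_mem d h, proj_apply_mem d h, hadd]
  · rw [hadd, proj_apply_not d h, proj_apply_not d h, proj_apply_not d h, add_zero]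

lemma proj_zero (c : (Fin n → ℤ) ⧸ diagLattice n d) : proj d c (0 : LaurentAlg F n) = 0 := by
  ext z
  by_cases h : z ∈ diagLattice n d
  · simp [proj_apply_mem d h]
  · simp [proj_apply_not d h]

/-- key computation: projection of `single y β * f`. -/
lemma proj_single_mul (c : (Fin n → ℤ) ⧸ diagLattice n d) (y : Fin n → ℤ) (β : F)
    (f : LaurentAlg F n) :
    proj d c (AddMonoidAlgebra.single y β * f)
      = AddMonoidAlgebra.single (rep d (c - QuotientAddGroup.mk y) + y - rep d c) β
          * proj d (c - QuotientAddGroup.mk y) f := by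
  have he : rep d (c - QuotientAddGroup.mk y) + y - rep d c ∈ diagLattice n d := by
    rw [← QuotientAddGroup.eq_zero_iff]
    simp only [QuotientAddGroup.mk_sub, QuotientAddGroup.mk_add, mk_rep]
    abel
  ext z
  rw [AddMonoidAlgebra.coeff_single_mul_apply]
  by_cases h : z ∈ diagLattice n d
  · rw [proj_apply_mem d h, AddMonoidAlgebra.coeff_single_mul_apply,
      proj_apply_mem d (show -(rep d (c - QuotientAddGroup.mk y) + y - rep d c) + z
        ∈ diagLattice n d from add_mem (neg_mem he) h)]
    congr 2
    abel
  · rw [proj_apply_not d h, proj_apply_not d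
      (show -(rep d (c - QuotientAddGroup.mk y) + y - rep d c) + z ∉ diagLattice n d by
        intro hmem
        have hz := add_mem he hmem
        rw [add_neg_cancel_left] at hz
        exact h hz), mul_zero]

/-- projection of an element supported in the lattice, at a nonzero coset, is zero -/
lemma proj_ne_zero_of_suppL {c : (Fin n → ℤ) ⧸ diagLattice n d} (hc : c ≠ 0)
    {g : LaurentAlg F n} (hg : ∀ z ∈ g.coeff.support, z ∈ diagLattice n d) :
    proj d c g = 0 := by
  ext z
  by_cases h : z ∈ diagLattice n d
  · rw [proj_apply_mem d h, AddMonoidAlgebra.coeff_zero, Finsupp.coe_zero, Pi.zero_apply]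
    by_contra hne
    have hmem := hg _ (Finsupp.mem_support_iff.2 hne)
    have : z + rep d c ∈ diagLattice n d := hmem
    have hcz : QuotientAddGroup.mk (z + rep d c) = (0 : (Fin n → ℤ) ⧸ diagLattice n d) :=
      (QuotientAddGroup.eq_zero_iff _).2 this
    rw [QuotientAddGroup.mk_add, mk_rep, (QuotientAddGroup.eq_zero_iff _).2 h, zero_add] at hcz
    exact hc hcz
  · rw [proj_apply_not d h, AddMonoidAlgebra.coeff_zero, Finsupp.coe_zero, Pi.zero_apply]

/-- projection at coset zero of a lattice-supported element -/
lemma proj_zero_of_suppL {g : LaurentAlg F n} (hg : ∀ z ∈ g.coeff.support, z ∈ diagLattice n d) :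
    proj d 0 g = AddMonoidAlgebra.single (-(rep d 0)) (1 : F) * g := by
  ext z
  rw [AddMonoidAlgebra.coeff_single_mul_apply, one_mul, neg_neg]
  by_cases h : z ∈ diagLattice n d
  · rw [proj_apply_mem d h, add_comm]
  · rw [proj_apply_not d h]
    by_contra hne
    have hmem := hg _ (Finsupp.mem_support_iff.2 (Ne.symm hne))
    exact h (by simpa using add_mem hmem (neg_mem (rep_zero_mem d)))

/-- orthogonality: `proj c (σ^{rep c} * g) = g` for lattice-supported `g` -/
lemma proj_mono_mul_self {c : (Fin n → ℤ) ⧸ diagLattice n d} {g : LaurentAlg F n}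
    (hg : ∀ z ∈ g.coeff.support, z ∈ diagLattice n d) :
    proj d c (AddMonoidAlgebra.single (rep d c) (1 : F) * g) = g := by
  ext z
  by_cases h : z ∈ diagLattice n d
  · rw [proj_apply_mem d h, AddMonoidAlgebra.coeff_single_mul_apply, one_mul]
    congr 1
    abel
  · rw [proj_apply_not d h]
    by_contra hne
    exact h (hg z (Finsupp.mem_support_iff.2 (Ne.symm hne)))

lemma proj_mono_mul_ne {c c' : (Fin n → ℤ) ⧸ diagLattice n d} (hcc : c' ≠ c)
    {g : LaurentAlg F n} (hg : ∀ z ∈ g.coeff.support, z ∈ diagLattice n d) :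
    proj d c' (AddMonoidAlgebra.single (rep d c) (1 : F) * g) = 0 := by
  ext z
  rw [AddMonoidAlgebra.coeff_zero, Finsupp.coe_zero, Pi.zero_apply]
  by_cases h : z ∈ diagLattice n d
  · rw [proj_apply_mem d h, AddMonoidAlgebra.coeff_single_mul_apply, one_mul]
    by_contra hne
    have hmem := hg _ (Finsupp.mem_support_iff.2 hne)
    have hq : QuotientAddGroup.mk (-(rep d c) + (z + rep d c'))
        = (0 : (Fin n → ℤ) ⧸ diagLattice n d) := (QuotientAddGroup.eq_zero_iff _).2 hmem
    rw [QuotientAddGroup.mk_add, QuotientAddGroup.mk_add, QuotientAddGroup.mk_neg, mk_rep,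
      mk_rep, (QuotientAddGroup.eq_zero_iff _).2 h, zero_add] at hq
    exact hcc (neg_add_eq_zero.mp hq).symm
  · rw [proj_apply_not d h]

/-- reconstruction: summing the translated projections over enough cosets recovers `f`. -/
lemma sum_mono_proj (f : LaurentAlg F n) (T : Finset ((Fin n → ℤ) ⧸ diagLattice n d))
    (hT : ∀ x ∈ f.coeff.support, QuotientAddGroup.mk x ∈ T) :
    ∑ c ∈ T, AddMonoidAlgebra.single (rep d c) (1 : F) * proj d c f = f := by
  ext w
  rw [AddMonoidAlgebra.coeff_sum, Finset.sum_apply']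
  have hterm : ∀ c ∈ T, (AddMonoidAlgebra.single (rep d c) (1 : F) * proj d c f).coeff w
      = if QuotientAddGroup.mk w = c then f.coeff w else 0 := by
    intro c _
    rw [AddMonoidAlgebra.coeff_single_mul_apply, one_mul]
    by_cases h : -(rep d c) + w ∈ diagLattice n d
    · rw [proj_apply_mem d h]
      have harg : -(rep d c) + w + rep d c = w := by abel
      rw [harg, if_pos]
      have : QuotientAddGroup.mk (-(rep d c) + w) = (0 : (Fin n → ℤ) ⧸ diagLattice n d) :=
        (QuotientAddGroup.eq_zero_iff _).2 h
      rw [QuotientAddGroup.mk_add, QuotientAddGroup.mk_neg, mk_rep] at this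
      have := neg_add_eq_zero.mp this
      exact this.symm
    · rw [proj_apply_not d h, if_neg]
      intro hw
      apply h
      rw [← hw] at h ⊢
      have : QuotientAddGroup.mk (-(rep d (QuotientAddGroup.mk w)) + w)
          = (0 : (Fin n → ℤ) ⧸ diagLattice n d) := by
        rw [QuotientAddGroup.mk_add, QuotientAddGroup.mk_neg, mk_rep, neg_add_cancel]
      exact (QuotientAddGroup.eq_zero_iff _).1 this
    
  rw [Finset.sum_congr rfl hterm, Finset.sum_ite_eq T (QuotientAddGroup.mk w) (fun _ => f.coeff w)]
  by_cases hw : f.coeff w = 0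
  · simp [hw]
  · rw [if_pos (hT w (Finsupp.mem_support_iff.2 hw))]


section Modules

variable {k : ℕ}

/-- the coset projection on `Aᵏ`, valued in `Bᵏ` -/
noncomputable def Psi (c : (Fin n → ℤ) ⧸ diagLattice n d)
    (v : Fin k → LaurentAlg F n) : Fin k → monoAlg F (diagLattice n d) :=
  fun j => ⟨proj d c (v j), proj_mem d c (v j)⟩

lemma Psi_zero (c : (Fin n → ℤ) ⧸ diagLattice n d) :
    Psi d c (0 : Fin k → LaurentAlg F n) = 0 := by
  funext j
  exact Subtype.ext (proj_zero d c)

lemma Psi_add (c : (Fin n → ℤ) ⧸ diagLattice n d) (v w : Fin k → LaurentAlg F n) :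
    Psi d c (v + w) = Psi d c v + Psi d c w := by
  funext j
  exact Subtype.ext (proj_add d c (v j) (w j))

/-- `Psi` bundled as an additive monoid hom -/
noncomputable def PsiHom (c : (Fin n → ℤ) ⧸ diagLattice n d) :
    (Fin k → LaurentAlg F n) →+ (Fin k → monoAlg F (diagLattice n d)) where
  toFun := Psi d c
  map_zero' := Psi_zero d c
  map_add' := Psi_add d c

lemma Psi_sum {ι : Type*} (c : (Fin n → ℤ) ⧸ diagLattice n d) (T : Finset ι)
    (g : ι → (Fin k → LaurentAlg F n)) :
    Psi d c (∑ x ∈ T, g x) = ∑ x ∈ T, Psi d c (g x) :=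
  map_sum (PsiHom d c) g T

lemma incl_apply (q : Fin k → monoAlg F (diagLattice n d)) (j : Fin k) :
    inclMap (monoAlg F (diagLattice n d)) k q j = ↑(q j) := rfl

lemma smul_pi_apply (a : LaurentAlg F n) (v : Fin k → LaurentAlg F n) (j : Fin k) :
    (a • v) j = a * v j := rfl

lemma shift_mem (c : (Fin n → ℤ) ⧸ diagLattice n d) (y : Fin n → ℤ) :
    rep d (c - QuotientAddGroup.mk y) + y - rep d c ∈ diagLattice n d := by
  rw [← QuotientAddGroup.eq_zero_iff]
  simp only [QuotientAddGroup.mk_sub, QuotientAddGroup.mk_add, mk_rep]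
  abel

/-- the lattice monomial used to compare projections at shifted cosets -/
noncomputable def bShift (c : (Fin n → ℤ) ⧸ diagLattice n d) (y : Fin n → ℤ) (β : F) :
    monoAlg F (diagLattice n d) :=
  ⟨AddMonoidAlgebra.single (rep d (c - QuotientAddGroup.mk y) + y - rep d c) β,
    mem_monoAlg_of_support d (fun z hz => by
      have hzz := Finsupp.support_single_subset hz
      simp only [Finset.mem_singleton] at hzz
      subst hzz
      exact shift_mem d c y)⟩

lemma Psi_single_smul (c : (Fin n → ℤ) ⧸ diagLattice n d) (y : Fin n → ℤ) (β : F)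
    (v : Fin k → LaurentAlg F n) :
    Psi d c ((AddMonoidAlgebra.single y β : LaurentAlg F n) • v)
      = bShift d c y β • Psi d (c - QuotientAddGroup.mk y) v := by
  funext j
  refine Subtype.ext ?_
  show proj d c (AddMonoidAlgebra.single y β * v j)
      = AddMonoidAlgebra.single (rep d (c - QuotientAddGroup.mk y) + y - rep d c) β
          * proj d (c - QuotientAddGroup.mk y) (v j)
  exact proj_single_mul d c y β (v j)

/-- the monomial `σ^{-rep 0}` as an element of `B` -/
noncomputable def bZero : monoAlg F (diagLattice n d) :=
  ⟨AddMonoidAlgebra.single (-(rep d 0)) (1 : F),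
    Algebra.subset_adjoin ⟨-(rep d 0), neg_mem (rep_zero_mem d), rfl⟩⟩

lemma Psi_incl (q : Fin k → monoAlg F (diagLattice n d)) :
    ∀ c, Psi d c (inclMap (monoAlg F (diagLattice n d)) k q)
      = if c = 0 then bZero (F := F) d • q else 0 := by
  intro c
  by_cases hc : c = 0
  · subst hc
    rw [if_pos rfl]
    funext j
    refine Subtype.ext ?_
    show proj d 0 ((q j : LaurentAlg F n))
        = AddMonoidAlgebra.single (-(rep d 0)) (1 : F) * (q j : LaurentAlg F n)
    exact proj_zero_of_suppL d (support_subset_of_mem d (q j).2)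
  · rw [if_neg hc]
    funext j
    refine Subtype.ext ?_
    show proj d c ((q j : LaurentAlg F n)) = 0
    exact proj_ne_zero_of_suppL d hc (support_subset_of_mem d (q j).2)

/-- **crux lemma**: every coset projection of an element of the extension lies in `Q`. -/
lemma Psi_mem_of_mem_extend (Q : Submodule (monoAlg F (diagLattice n d))
      (Fin k → monoAlg F (diagLattice n d)))
    {v : Fin k → LaurentAlg F n}
    (hv : v ∈ Submodule.span (LaurentAlg F n)
      (inclMap (monoAlg F (diagLattice n d)) k '' Q)) :
    ∀ c, Psi d c v ∈ Q := by
  induction hv using Submodule.span_induction with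
  | mem x hx =>
    obtain ⟨q, hq, rfl⟩ := hx
    intro c
    rw [Psi_incl d q c]
    split_ifs
    · exact Q.smul_mem _ hq
    · exact Q.zero_mem
  | zero => intro c; rw [Psi_zero]; exact Q.zero_mem
  | add x y hx hy ihx ihy => intro c; rw [Psi_add]; exact Q.add_mem (ihx c) (ihy c)
  | smul a x hx ih =>
    induction a using AddMonoidAlgebra.induction with
    | zero =>
      intro c
      rw [zero_smul, Psi_zero]
      exact Q.zero_mem
    | single_add y β t _ _ iht =>
      intro c
      rw [add_smul, Psi_add]
      refine Q.add_mem ?_ (iht c)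
      rw [Psi_single_smul]
      exact Q.smul_mem _ (ih _)

lemma Psi_mono_smul_self (c : (Fin n → ℤ) ⧸ diagLattice n d)
    (q : Fin k → monoAlg F (diagLattice n d)) :
    Psi d c (mono F (rep d c) • inclMap (monoAlg F (diagLattice n d)) k q) = q := by
  funext j
  refine Subtype.ext ?_
  show proj d c (AddMonoidAlgebra.single (rep d c) (1 : F) * (q j : LaurentAlg F n)) = ↑(q j)
  exact proj_mono_mul_self d (support_subset_of_mem d (q j).2)

lemma Psi_mono_smul_ne {c c' : (Fin n → ℤ) ⧸ diagLattice n d} (hcc : c' ≠ c)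
    (q : Fin k → monoAlg F (diagLattice n d)) :
    Psi d c' (mono F (rep d c) • inclMap (monoAlg F (diagLattice n d)) k q) = 0 := by
  funext j
  refine Subtype.ext ?_
  show proj d c' (AddMonoidAlgebra.single (rep d c) (1 : F) * (q j : LaurentAlg F n)) = 0
  exact proj_mono_mul_ne d hcc (support_subset_of_mem d (q j).2)

variable (Q : Submodule (monoAlg F (diagLattice n d)) (Fin k → monoAlg F (diagLattice n d)))

/-- the building block of the forward map -/
noncomputable def phi0 (c : (Fin n → ℤ) ⧸ diagLattice n d) :
    (Fin k → monoAlg F (diagLattice n d))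
      →ₗ[monoAlg F (diagLattice n d)]
    ((Fin k → LaurentAlg F n) ⧸ extendTo (monoAlg F (diagLattice n d)) Q) where
  toFun q := Submodule.Quotient.mk
    (mono F (rep d c) • inclMap (monoAlg F (diagLattice n d)) k q)
  map_add' q r := by
    rw [map_add, smul_add, Submodule.Quotient.mk_add]
  map_smul' b q := by
    rw [map_smul, smul_comm, RingHom.id_apply, Submodule.Quotient.mk_smul]

lemma phi0_ker (c : (Fin n → ℤ) ⧸ diagLattice n d) :
    Q ≤ LinearMap.ker (phi0 d Q c) := by
  intro q hq
  rw [LinearMap.mem_ker]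
  show Submodule.Quotient.mk
    (mono F (rep d c) • inclMap (monoAlg F (diagLattice n d)) k q) = 0
  rw [Submodule.Quotient.mk_eq_zero]
  exact Submodule.smul_mem _ _ (Submodule.subset_span ⟨q, hq, rfl⟩)

noncomputable def phiQ (c : (Fin n → ℤ) ⧸ diagLattice n d) :
    ((Fin k → monoAlg F (diagLattice n d)) ⧸ Q)
      →ₗ[monoAlg F (diagLattice n d)]
    ((Fin k → LaurentAlg F n) ⧸ extendTo (monoAlg F (diagLattice n d)) Q) :=
  Submodule.liftQ Q (phi0 d Q c) (phi0_ker d Q c)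

noncomputable def Phi :
    (⨁ _c : (Fin n → ℤ) ⧸ diagLattice n d, ((Fin k → monoAlg F (diagLattice n d)) ⧸ Q))
      →ₗ[monoAlg F (diagLattice n d)]
    ((Fin k → LaurentAlg F n) ⧸ extendTo (monoAlg F (diagLattice n d)) Q) :=
  DirectSum.toModule _ _ _ (fun c => phiQ d Q c)

end Modules

end ExtAux

set_option maxHeartbeats 4000000 in
/-- `Aᵏ/Q^e`, as an `A_d`-module, is isomorphic to the direct sum of
copies of `A_dᵏ/Q` indexed by the cosets of `L_d` in `ℤⁿ`. -/
theorem extension_quotient_iso_directSum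
    {F : Type*} [Field F] {n k : ℕ} (hn : 0 < n) (hk : 1 ≤ k)
    (d : Fin n → ℕ)
    (Q : Submodule (monoAlg F (diagLattice n d)) (Fin k → monoAlg F (diagLattice n d))) :
    Nonempty
      (((Fin k → LaurentAlg F n) ⧸ extendTo (monoAlg F (diagLattice n d)) Q)
        ≃ₗ[monoAlg F (diagLattice n d)]
      (⨁ _c : (Fin n → ℤ) ⧸ diagLattice n d,
        ((Fin k → monoAlg F (diagLattice n d)) ⧸ Q))) := by
  -- surjectivity of Φ
  have hsurj : Function.Surjective (ExtAux.Phi d Q) := by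
    classical
    intro x
    obtain ⟨v, rfl⟩ := Submodule.Quotient.mk_surjective _ x
    set T : Finset ((Fin n → ℤ) ⧸ diagLattice n d) :=
      Finset.biUnion Finset.univ
        (fun j : Fin k => Finset.image
          (QuotientAddGroup.mk (s := diagLattice n d)) (v j).coeff.support) with hTdef
    set G : ((Fin n → ℤ) ⧸ diagLattice n d) → (Fin k → LaurentAlg F n) :=
      fun c => mono F (ExtAux.rep d c) •
        inclMap (monoAlg F (diagLattice n d)) k (ExtAux.Psi d c v) with hGdef
    refine ⟨∑ c ∈ T, DirectSum.lof (monoAlg F (diagLattice n d))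
      ((Fin n → ℤ) ⧸ diagLattice n d)
      (fun _ => (Fin k → monoAlg F (diagLattice n d)) ⧸ Q) c
      (Submodule.Quotient.mk (ExtAux.Psi d c v)), ?_⟩
    rw [map_sum]
    have hterm : ∀ c ∈ T, ExtAux.Phi d Q (DirectSum.lof (monoAlg F (diagLattice n d))
        ((Fin n → ℤ) ⧸ diagLattice n d)
        (fun _ => (Fin k → monoAlg F (diagLattice n d)) ⧸ Q) c
        (Submodule.Quotient.mk (ExtAux.Psi d c v)))
        = Submodule.Quotient.mk (G c) := by
      intro c _
      rw [ExtAux.Phi, DirectSum.toModule_lof, ExtAux.phiQ, Submodule.liftQ_apply]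
      rfl
    rw [Finset.sum_congr rfl hterm]
    have hsum := map_sum (Submodule.mkQ (extendTo (monoAlg F (diagLattice n d)) Q)) G T
    simp only [Submodule.mkQ_apply] at hsum
    rw [← hsum]
    have hGsum : (∑ c ∈ T, G c) = v := by
      funext j
      rw [Finset.sum_apply]
      have hcoord : ∀ c, G c j
          = AddMonoidAlgebra.single (ExtAux.rep d c) (1 : F) * ExtAux.proj d c (v j) :=
        fun _ => rfl
      simp only [hcoord]
      refine ExtAux.sum_mono_proj d (v j) T fun x hx => ?_
      rw [hTdef]
      exact Finset.mem_biUnion.2 ⟨j, Finset.mem_univ j,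
        Finset.mem_image.2 ⟨x, hx, rfl⟩⟩
    rw [hGsum]
  -- injectivity of Φ
  have hinj0 : ∀ w, ExtAux.Phi d Q w = 0 → w = 0 := by
    classical
    intro w hw
    set T := DFinsupp.support w with hTdef
    have hu : ∀ c, ∃ u : Fin k → monoAlg F (diagLattice n d),
        Submodule.Quotient.mk u = w c :=
      fun c => Submodule.Quotient.mk_surjective Q (w c)
    choose u hu using hu
    set G : ((Fin n → ℤ) ⧸ diagLattice n d) → (Fin k → LaurentAlg F n) :=
      fun c => mono F (ExtAux.rep d c) •
        inclMap (monoAlg F (diagLattice n d)) k (u c) with hGdef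
    have hPhi : ExtAux.Phi d Q w = Submodule.Quotient.mk (∑ c ∈ T, G c) := by
      conv_lhs => rw [← DirectSum.sum_support_of w]
      rw [map_sum]
      have hterm : ∀ c ∈ T, ExtAux.Phi d Q (DirectSum.of
          (fun _ : (Fin n → ℤ) ⧸ diagLattice n d =>
            (Fin k → monoAlg F (diagLattice n d)) ⧸ Q) c (w c))
          = Submodule.Quotient.mk (G c) := by
        intro c _
        rw [← hu c, ← DirectSum.lof_eq_of (monoAlg F (diagLattice n d)), ExtAux.Phi,
          DirectSum.toModule_lof, ExtAux.phiQ, Submodule.liftQ_apply]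
        rfl
      rw [Finset.sum_congr rfl hterm]
      have hsum := map_sum (Submodule.mkQ (extendTo (monoAlg F (diagLattice n d)) Q)) G T
      simp only [Submodule.mkQ_apply] at hsum
      rw [← hsum]
    rw [hPhi, Submodule.Quotient.mk_eq_zero] at hw
    have hVQ : ∀ c, ExtAux.Psi d c (∑ c ∈ T, G c) ∈ Q :=
      ExtAux.Psi_mem_of_mem_extend d Q hw
    have hcomp : ∀ c₀ ∈ T, w c₀ = 0 := by
      intro c₀ hc₀
      have hsum : ExtAux.Psi d c₀ (∑ c ∈ T, G c) = u c₀ := by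
        rw [ExtAux.Psi_sum d c₀ T G]
        have hterm : ∀ c ∈ T, ExtAux.Psi d c₀ (G c)
            = if c = c₀ then u c₀ else 0 := by
          intro c _
          by_cases hc : c = c₀
          · subst hc
            rw [if_pos rfl]
            exact ExtAux.Psi_mono_smul_self d c (u c)
          · rw [if_neg hc]
            exact ExtAux.Psi_mono_smul_ne d (fun h => hc h.symm) (u c)
        rw [Finset.sum_congr rfl hterm, Finset.sum_ite_eq' T c₀ (fun _ => u c₀),
          if_pos hc₀]
      rw [← hu c₀, Submodule.Quotient.mk_eq_zero]
      have := hVQ c₀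
      rwa [hsum] at this
    refine DFunLike.ext w 0 fun c₀ => ?_
    rw [DFinsupp.zero_apply]
    by_cases hc₀ : c₀ ∈ T
    · exact hcomp c₀ hc₀
    · exact DFinsupp.notMem_support_iff.1 hc₀
  exact ⟨(LinearEquiv.ofBijective (ExtAux.Phi d Q)
    ⟨by
      letI : AddCommGroup (⨁ _c : (Fin n → ℤ) ⧸ diagLattice n d,
          ((Fin k → monoAlg F (diagLattice n d)) ⧸ Q)) :=
        @DirectSum.instAddCommGroup _ _ (fun _ => Submodule.Quotient.addCommGroup Q)
      exact fun a b hab => sub_eq_zero.1 (hinj0 (a - b) (by rw [map_sub, hab, sub_self])), hsurj⟩).symm⟩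
end

section
/- Let d ∈ ℕⁿ. (i) For every A-submodule P of Aᵏ, the extension of its contraction satisfies (P^c)^e ⊆ P, and contracting again recovers the contraction: ((P^c)^e)^c = P^c. (ii) For every A_d-submodule Q of A_dᵏ, the contraction of its extension recovers Q: (Q^e)^c = Q, i.e. Q^e ∩ A_dᵏ = Q (as a consequence, if an A-submodule P of Aᵏ equals Q^e for some A_d-submodule Q of A_dᵏ, then Q = P^c). -/
open scoped BigOperators

set_option synthInstance.maxHeartbeats 1000000
set_option maxHeartbeats 1000000

section Aux
variable {F : Type*} [Field F] {n : ℕ} (S : AddSubgroup (Fin n → ℤ))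

/-- The monomials with exponent in `S`, as a submonoid of `A`. -/
noncomputable def monoSubmonoid : Submonoid (LaurentAlg F n) where
  carrier := {a : LaurentAlg F n | ∃ x ∈ S, a = mono F x}
  one_mem' := ⟨0, S.zero_mem, (AddMonoidAlgebra.one_def).symm⟩
  mul_mem' := by
    rintro a b ⟨x, hx, rfl⟩ ⟨y, hy, rfl⟩
    exact ⟨x + y, S.add_mem hx hy, by
      simp [mono, AddMonoidAlgebra.single_mul_single]⟩

lemma mem_monoAlg_iff (f : LaurentAlg F n) :
    f ∈ monoAlg F S ↔ ∀ x ∈ f.coeff.support, x ∈ S := by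
  have h1 : f ∈ monoAlg F S ↔
      f ∈ Submodule.span F {a : LaurentAlg F n | ∃ x ∈ S, a = mono F x} := by
    rw [monoAlg, ← Subalgebra.mem_toSubmodule, Algebra.adjoin_eq_span,
      show Submonoid.closure {a : LaurentAlg F n | ∃ x ∈ S, a = mono F x} = monoSubmonoid S
        from Submonoid.closure_eq (monoSubmonoid (F:=F) S)]
    exact Iff.rfl
  have h2 : {a : LaurentAlg F n | ∃ x ∈ S, a = mono F x}
      = (fun i => AddMonoidAlgebra.single i (1:F)) '' (S : Set (Fin n → ℤ)) := by
    ext a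
    constructor
    · rintro ⟨x, hx, rfl⟩; exact ⟨x, hx, rfl⟩
    · rintro ⟨x, hx, rfl⟩; exact ⟨x, hx, rfl⟩
  rw [h1, h2, ← AddMonoidAlgebra.supported_eq_span_single, AddMonoidAlgebra.mem_supported]
  exact ⟨fun h x hx => h hx, fun h x hx => h x hx⟩

end Aux

section Proj
variable {F : Type*} [Field F] {n : ℕ} (S : AddSubgroup (Fin n → ℤ))

open Classical in
/-- Projection of `A` onto `A_S`, keeping only monomials with exponent in `S`. -/
noncomputable def piS (f : LaurentAlg F n) : LaurentAlg F n :=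
  AddMonoidAlgebra.ofCoeff (Finsupp.filter (· ∈ S) f.coeff)

lemma piS_add (f g : LaurentAlg F n) : piS S (f + g) = piS S f + piS S g := by
  classical
  exact congrArg AddMonoidAlgebra.ofCoeff Finsupp.filter_add

/-- `piS` as an additive monoid hom. -/
noncomputable def piSHom : LaurentAlg F n →+ LaurentAlg F n :=
  AddMonoidHom.mk' (piS S) (piS_add S)

lemma piS_sum {ι : Type*} (s : Finset ι) (g : ι → LaurentAlg F n) :
    piS S (∑ i ∈ s, g i) = ∑ i ∈ s, piS S (g i) :=
  map_sum (piSHom S) g s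

lemma piS_mem (f : LaurentAlg F n) : piS S f ∈ monoAlg F S := by
  classical
  refine (mem_monoAlg_iff S _).2 fun x hx => ?_
  rw [piS, AddMonoidAlgebra.coeff_ofCoeff] at hx
  rw [Finsupp.support_filter] at hx
  exact (Finset.mem_filter.1 hx).2

lemma piS_eq_self (f : LaurentAlg F n) (hf : f ∈ monoAlg F S) : piS S f = f := by
  classical
  show AddMonoidAlgebra.ofCoeff _ = AddMonoidAlgebra.ofCoeff f.coeff
  rw [AddMonoidAlgebra.ofCoeff_inj, Finsupp.filter_eq_self_iff]
  intro x hx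
  exact (mem_monoAlg_iff S f).1 hf x (Finsupp.mem_support_iff.2 hx)

lemma piS_zero : piS S (0 : LaurentAlg F n) = 0 := map_zero (piSHom S)

lemma piS_single_mul {x : Fin n → ℤ} (hx : x ∈ S) (c : F) (f : LaurentAlg F n) :
    piS S (AddMonoidAlgebra.single x c * f) = AddMonoidAlgebra.single x c * piS S f := by
  classical
  induction f using AddMonoidAlgebra.induction_linear with
  | zero => rw [mul_zero, piS_zero, mul_zero]
  | add f g hf hg => rw [mul_add, piS_add, piS_add, mul_add, hf, hg]
  | single y e =>
    rw [AddMonoidAlgebra.single_mul_single]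
    by_cases hy : y ∈ S
    · rw [piS, AddMonoidAlgebra.coeff_single, Finsupp.filter_single_of_pos _ (S.add_mem hx hy), piS,
        AddMonoidAlgebra.coeff_single, Finsupp.filter_single_of_pos _ hy,
        AddMonoidAlgebra.ofCoeff_single, AddMonoidAlgebra.ofCoeff_single,
        AddMonoidAlgebra.single_mul_single]
    · rw [piS, AddMonoidAlgebra.coeff_single, Finsupp.filter_single_of_neg, piS,
        AddMonoidAlgebra.coeff_single, Finsupp.filter_single_of_neg _ hy,
        AddMonoidAlgebra.ofCoeff_zero, mul_zero]
      intro h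
      exact hy (by simpa using S.add_mem (S.neg_mem hx) h)

lemma piS_mul (b f : LaurentAlg F n) (hb : b ∈ monoAlg F S) :
    piS S (b * f) = b * piS S f := by
  have hb' := (mem_monoAlg_iff S b).1 hb
  have h1 : piS S (b * f) = b.coeff.sum fun x c => piS S (AddMonoidAlgebra.single x c * f) := by
    conv_lhs => rw [← AddMonoidAlgebra.sum_coeff_single b, Finsupp.sum_mul]
    exact map_finsuppSum (piSHom S) b.coeff _
  rw [h1]
  conv_rhs => rw [← AddMonoidAlgebra.sum_coeff_single b, Finsupp.sum_mul]
  exact Finsupp.sum_congr fun x hx => piS_single_mul S (hb' x hx) _ f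

end Proj

section Main
variable {F : Type*} [Field F] {n k : ℕ} (S : AddSubgroup (Fin n → ℤ))

lemma extend_contr_le (P : Submodule (LaurentAlg F n) (Fin k → LaurentAlg F n)) :
    extendTo (monoAlg F S) (contrTo (monoAlg F S) P) ≤ P := by
  rw [extendTo, Submodule.span_le]
  rintro _ ⟨q, hq, rfl⟩
  exact hq

lemma le_contr_extend (Q : Submodule (monoAlg F S) (Fin k → monoAlg F S)) :
    Q ≤ contrTo (monoAlg F S) (extendTo (monoAlg F S) Q) :=
  fun _ hq => Submodule.subset_span (Set.mem_image_of_mem _ hq)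

lemma contr_extend_le (Q : Submodule (monoAlg F S) (Fin k → monoAlg F S)) :
    contrTo (monoAlg F S) (extendTo (monoAlg F S) Q) ≤ Q := by
  classical
  intro b hb
  have hb2 : inclMap (monoAlg F S) k b
      ∈ Submodule.span (LaurentAlg F n) (inclMap (monoAlg F S) k '' ↑Q) := hb
  obtain ⟨c, hc, hsum⟩ := Submodule.mem_span_set.1 hb2
  have h : ∀ m ∈ c.support, ∃ x, x ∈ Q ∧ inclMap (monoAlg F S) k x = m := by
    intro m hm
    obtain ⟨x, hx, hxe⟩ := hc hm
    exact ⟨x, hx, hxe⟩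
  choose qf hqfQ hqf using h
  have hb' : (∑ m ∈ c.support.attach,
      (⟨piS S (c m.1), piS_mem S _⟩ : monoAlg F S) • qf m.1 m.2) ∈ Q :=
    Submodule.sum_mem _ fun m _ => Q.smul_mem _ (hqfQ m.1 m.2)
  have hkey : b = ∑ m ∈ c.support.attach,
      (⟨piS S (c m.1), piS_mem S _⟩ : monoAlg F S) • qf m.1 m.2 := by
    funext i
    apply Subtype.ext
    have h1 : (b i : LaurentAlg F n) = piS S (inclMap (monoAlg F S) k b i) :=
      (piS_eq_self S _ (b i).2).symm
    have h2 : Finsupp.sum c (fun mi r => r • mi) i = ∑ m ∈ c.support, c m * m i := by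
      rw [Finsupp.sum, Finset.sum_apply]
      rfl
    have h3 : ((∑ m ∈ c.support.attach,
        (⟨piS S (c m.1), piS_mem S _⟩ : monoAlg F S) • qf m.1 m.2) i : LaurentAlg F n)
        = ∑ m ∈ c.support.attach, piS S (c m.1) * (qf m.1 m.2 i : LaurentAlg F n) := by
      rw [Finset.sum_apply]
      push_cast
      rfl
    rw [h3, h1, ← hsum, h2, piS_sum,
      ← Finset.sum_attach c.support fun m => piS S (c m * m i)]
    refine Finset.sum_congr rfl fun m _ => ?_
    have hmi : m.1 i = (qf m.1 m.2 i : LaurentAlg F n) := (congrFun (hqf m.1 m.2) i).symm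
    have hmem : m.1 i ∈ monoAlg F S := by
      rw [hmi]; exact (qf m.1 m.2 i).2
    rw [mul_comm, piS_mul S _ _ hmem, mul_comm (m.1 i), hmi]
  rw [hkey]
  exact hb'

end Main

/-- (i) `(P^c)^e ⊆ P` and `((P^c)^e)^c = P^c`;
(ii) `(Q^e)^c = Q`; consequently if `P = Q^e` then `Q = P^c`. -/
theorem contraction_extension_relations
    {F : Type*} [Field F] {n k : ℕ} (hn : 0 < n) (hk : 1 ≤ k)
    (d : Fin n → ℕ) :
    (∀ P : Submodule (LaurentAlg F n) (Fin k → LaurentAlg F n),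
      extendTo (monoAlg F (diagLattice n d)) (contrTo (monoAlg F (diagLattice n d)) P) ≤ P ∧
      contrTo (monoAlg F (diagLattice n d))
          (extendTo (monoAlg F (diagLattice n d)) (contrTo (monoAlg F (diagLattice n d)) P))
        = contrTo (monoAlg F (diagLattice n d)) P) ∧
    (∀ Q : Submodule (monoAlg F (diagLattice n d)) (Fin k → monoAlg F (diagLattice n d)),
      contrTo (monoAlg F (diagLattice n d)) (extendTo (monoAlg F (diagLattice n d)) Q) = Q) ∧
    (∀ (P : Submodule (LaurentAlg F n) (Fin k → LaurentAlg F n))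
       (Q : Submodule (monoAlg F (diagLattice n d)) (Fin k → monoAlg F (diagLattice n d))),
      P = extendTo (monoAlg F (diagLattice n d)) Q →
      Q = contrTo (monoAlg F (diagLattice n d)) P) := by
  refine ⟨fun P => ⟨extend_contr_le _ P,
      le_antisymm (fun x hx => extend_contr_le _ P hx) (le_contr_extend _ _)⟩,
    fun Q => le_antisymm (contr_extend_le _ Q) (le_contr_extend _ Q), ?_⟩
  rintro P Q rfl
  exact (le_antisymm (contr_extend_le _ Q) (le_contr_extend _ Q)).symm
end

section
/- Let F be an algebraically closed field and d = (d₁,…,dₙ) ∈ ℕⁿ with every dᵢ ≥ 1 and every dᵢ invertible in F (i.e. char F = 0, or char F = p with p not dividing any dᵢ). Then the map ζ ↦ g_ζ is a group isomorphism from the product μ_{d₁}(F) × ⋯ × μ_{dₙ}(F) of the groups of dᵢ-th roots of unity in F onto the group of F-algebra automorphisms of A that fix the subalgebra A_d pointwise. -/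
open scoped BigOperators

set_option synthInstance.maxHeartbeats 1000000
set_option maxHeartbeats 1000000

/-- The subgroup of `F`-algebra automorphisms of `A` fixing the subalgebra `B` pointwise. -/
def fixSubgroup {F : Type*} [Field F] {n : ℕ} (B : Subalgebra F (LaurentAlg F n)) :
    Subgroup (LaurentAlg F n ≃ₐ[F] LaurentAlg F n) where
  carrier := {g | ∀ a ∈ B, g a = a}
  one_mem' := fun a _ => rfl
  mul_mem' := fun {g h} hg hh a ha => by
    rw [AlgEquiv.mul_apply, hh a ha, hg a ha]
  inv_mem' := fun {g} hg a ha =>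
    g.symm_apply_eq.mpr (hg a ha).symm

section Aux

variable {F : Type*} [Field F] {n : ℕ}

lemma mono_mul' (x y : Fin n → ℤ) : mono F x * mono F y = mono F (x + y) := by
  simp [mono, AddMonoidAlgebra.single_mul_single]

lemma mono_zero' : mono F (0 : Fin n → ℤ) = 1 := rfl

lemma mono_pow' (x : Fin n → ℤ) (k : ℕ) : mono F x ^ k = mono F (k • x) := by
  simp [mono, AddMonoidAlgebra.single_pow]

instance inst_s9 : IsDomain (LaurentAlg F n) := NoZeroDivisors.to_isDomain _

/-- the character attached to ζ -/
noncomputable def chi (ζ : Fin n → Fˣ) : Multiplicative (Fin n → ℤ) →* Fˣ where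
  toFun x := ∏ i, (ζ i) ^ (Multiplicative.toAdd x i)
  map_one' := by simp
  map_mul' x y := by
    simp only [toAdd_mul, Pi.add_apply, zpow_add, Finset.prod_mul_distrib]

noncomputable def psi (ζ : Fin n → Fˣ) : Multiplicative (Fin n → ℤ) →* LaurentAlg F n where
  toFun x := ((chi ζ x : Fˣ) : F) • mono F (Multiplicative.toAdd x)
  map_one' := by simp [mono_zero']
  map_mul' x y := by
    simp only [map_mul, Units.val_mul, toAdd_mul, smul_smul]
    rw [← mono_mul']
    rw [smul_mul_smul_comm]

noncomputable def gHom (ζ : Fin n → Fˣ) : LaurentAlg F n →ₐ[F] LaurentAlg F n :=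
  AddMonoidAlgebra.lift F (LaurentAlg F n) (Fin n → ℤ) (psi ζ)

lemma gHom_mono (ζ : Fin n → Fˣ) (x : Fin n → ℤ) :
    gHom ζ (mono F x) = ((∏ i, (ζ i) ^ (x i) : Fˣ) : F) • mono F x := by
  rw [gHom, mono, AddMonoidAlgebra.lift_single, one_smul]
  rfl

lemma gHom_comp (ζ ζ' : Fin n → Fˣ) : (gHom ζ).comp (gHom ζ') = gHom (ζ * ζ' : Fin n → Fˣ) := by
  apply AddMonoidAlgebra.algHom_ext
  intro x
  show gHom ζ (gHom ζ' (mono F x)) = gHom (ζ * ζ') (mono F x)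
  rw [gHom_mono, map_smul, gHom_mono, gHom_mono, smul_smul, ← Units.val_mul,
    ← Finset.prod_mul_distrib]
  congr 2
  refine Finset.prod_congr rfl fun i _ => ?_
  simp [mul_zpow, mul_comm]
  exact Subsingleton.elim _ _

lemma gHom_one : gHom (1 : Fin n → Fˣ) = AlgHom.id F (LaurentAlg F n) := by
  apply AddMonoidAlgebra.algHom_ext
  intro x
  show gHom 1 (mono F x) = mono F x
  rw [gHom_mono]
  simp
  exact Subsingleton.elim _ _

noncomputable def gEquiv (ζ : Fin n → Fˣ) : LaurentAlg F n ≃ₐ[F] LaurentAlg F n :=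
  AlgEquiv.ofAlgHom (gHom ζ) (gHom ζ⁻¹)
    (by rw [gHom_comp, mul_inv_cancel, gHom_one])
    (by rw [gHom_comp, inv_mul_cancel, gHom_one])

lemma gEquiv_mono (ζ : Fin n → Fˣ) (x : Fin n → ℤ) :
    gEquiv ζ (mono F x) = ((∏ i, (ζ i) ^ (x i) : Fˣ) : F) • mono F x := gHom_mono ζ x

/-- the monomial as a unit -/
noncomputable def monoUnit (x : Fin n → ℤ) : (LaurentAlg F n)ˣ where
  val := mono F x
  inv := mono F (-x)
  val_inv := by rw [mono_mul', add_neg_cancel, mono_zero']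
  inv_val := by rw [mono_mul', neg_add_cancel, mono_zero']

noncomputable def monoUnitHom : Multiplicative (Fin n → ℤ) →* (LaurentAlg F n)ˣ where
  toFun x := monoUnit (Multiplicative.toAdd x)
  map_one' := by ext; simp [monoUnit, mono_zero']
  map_mul' x y := by ext; simp [monoUnit, mono_mul']

lemma exists_scalar [IsAlgClosed F] (m : ℕ) (hm : 0 < m) (u : LaurentAlg F n)
    (hu : u ^ m = 1) : ∃ c : F, c ^ m = 1 ∧ u = algebraMap F (LaurentAlg F n) c := by
  set p : Polynomial F := Polynomial.X ^ m - Polynomial.C 1 with hp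
  have hmonic : p.Monic := Polynomial.monic_X_pow_sub_C 1 hm.ne'
  have hsplit : Polynomial.Splits p := IsAlgClosed.splits p
  have hfac := hsplit.eq_prod_roots_of_monic hmonic
  have h0 : Polynomial.aeval u p = 0 := by
    simp [hp, hu]
  rw [hfac] at h0
  rw [Polynomial.aeval_def, Polynomial.eval₂_multiset_prod] at h0
  rw [Multiset.map_map] at h0
  have h0' : (Multiset.map (fun a => u - algebraMap F (LaurentAlg F n) a) p.roots).prod = 0 := by
    rw [← h0]
    congr 1
    apply Multiset.map_congr rfl
    intro a _
    simp [Polynomial.eval₂_sub, Polynomial.aeval_def]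
  rw [Multiset.prod_eq_zero_iff] at h0'
  obtain ⟨a, ha, hae⟩ := Multiset.mem_map.mp h0'
  refine ⟨a, ?_, sub_eq_zero.mp hae⟩
  · have := Polynomial.isRoot_of_mem_roots ha
    simp only [hp, Polynomial.IsRoot, Polynomial.eval_sub, Polynomial.eval_pow,
      Polynomial.eval_X, Polynomial.eval_C] at this
    exact sub_eq_zero.mp this

lemma ofAdd_eq_prod (x : Fin n → ℤ) :
    (Multiplicative.ofAdd x) = ∏ i, (Multiplicative.ofAdd (Pi.single i (1 : ℤ))) ^ (x i) := by
  apply Multiplicative.toAdd.injective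
  rw [toAdd_prod]
  simp only [toAdd_zpow, toAdd_ofAdd]
  have hsingle : ∀ i : Fin n, x i • (Pi.single i (1:ℤ) : Fin n → ℤ) = Pi.single i (x i) := by
    intro i
    ext j
    simp [Pi.single_apply]
  rw [Finset.sum_congr rfl (fun i _ => hsingle i), Finset.univ_sum_single]

lemma monoidHom_ext_single {M : Type*} [CommGroup M]
    (f g : Multiplicative (Fin n → ℤ) →* M)
    (h : ∀ i, f (Multiplicative.ofAdd (Pi.single i 1)) = g (Multiplicative.ofAdd (Pi.single i 1)))
    (x : Fin n → ℤ) : f (Multiplicative.ofAdd x) = g (Multiplicative.ofAdd x) := by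
  rw [ofAdd_eq_prod, map_prod, map_prod]
  refine Finset.prod_congr rfl fun i _ => ?_
  rw [map_zpow, map_zpow, h i]

lemma gEquiv_fixes (ζ : Fin n → Fˣ) (d : Fin n → ℕ) (hζ : ∀ i, ζ i ∈ rootsOfUnity (d i) F) :
    ∀ a ∈ monoAlg F (diagLattice n d), gEquiv ζ a = a := by
  intro a ha
  have hle : monoAlg F (diagLattice n d) ≤
      AlgHom.equalizer (gEquiv ζ).toAlgHom (AlgHom.id F (LaurentAlg F n)) := by
    rw [monoAlg]
    apply Algebra.adjoin_le
    rintro _ ⟨x, hx, rfl⟩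
    show gEquiv ζ (mono F x) = mono F x
    rw [gEquiv_mono]
    have hone : (∏ i, ζ i ^ x i : Fˣ) = 1 := by
      apply Finset.prod_eq_one
      intro i _
      obtain ⟨m, hm⟩ := hx i
      have h1 : (ζ i) ^ ((d i : ℤ)) = 1 := by
        rw [zpow_natCast]
        exact (mem_rootsOfUnity _ _).mp (hζ i)
      rw [hm, zpow_mul, h1, one_zpow]
    rw [hone]
    simp
  exact hle ha

noncomputable def Phi (d : Fin n → ℕ) :
    (Subgroup.pi Set.univ fun i => rootsOfUnity (d i) F) →*
      fixSubgroup (monoAlg F (diagLattice n d)) where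
  toFun ζ := ⟨gEquiv (ζ : Fin n → Fˣ),
    gEquiv_fixes _ d (fun i => ((Subgroup.mem_pi Set.univ).mp ζ.2) i (Set.mem_univ i))⟩
  map_one' := by
    apply Subtype.ext
    apply AlgEquiv.ext
    intro a
    show gHom (1 : Fin n → Fˣ) a = a
    rw [gHom_one]
    rfl
  map_mul' ζ ζ' := by
    apply Subtype.ext
    apply AlgEquiv.ext
    intro a
    show gHom ((ζ : Fin n → Fˣ) * (ζ' : Fin n → Fˣ)) a = gHom _ (gHom _ a)
    rw [← gHom_comp]
    rfl


lemma prod_zpow_single (ζ : Fin n → Fˣ) (i : Fin n) :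
    (∏ j, ζ j ^ ((Pi.single i (1:ℤ) : Fin n → ℤ) j)) = ζ i := by
  rw [Finset.prod_eq_single i]
  · simp
  · intro j _ hj
    simp [Pi.single_apply, hj]
  · intro h
    exact absurd (Finset.mem_univ i) h

end Aux

/-- `ζ ↦ g_ζ` is a group isomorphism from `μ_{d₁}(F) × ⋯ × μ_{dₙ}(F)` onto
the group of `F`-algebra automorphisms of `A` fixing `A_d` pointwise. -/
theorem galoisGroup_of_diagonal_sublattice
    {F : Type*} [Field F] [IsAlgClosed F] {n : ℕ} (hn : 0 < n)
    (d : Fin n → ℕ) (hd : ∀ i, 1 ≤ d i) (hinv : ∀ i, (d i : F) ≠ 0) :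
    ∃ e : (Subgroup.pi Set.univ fun i => rootsOfUnity (d i) F) ≃*
        fixSubgroup (monoAlg F (diagLattice n d)),
      ∀ (ζ : Subgroup.pi Set.univ fun i => rootsOfUnity (d i) F) (x : Fin n → ℤ),
        (e ζ : LaurentAlg F n ≃ₐ[F] LaurentAlg F n) (mono F x)
          = (((∏ i, ((ζ : Fin n → Fˣ) i) ^ (x i) : Fˣ) : F)) • mono F x := by
  classical
  have hsurj : Function.Surjective (Phi (F := F) d) := by
    rintro ⟨g, hg⟩
    have key : ∀ i : Fin n, ∃ c : F, c ^ d i = 1 ∧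
        g (mono F (Pi.single i (1:ℤ)))
          = algebraMap F (LaurentAlg F n) c * mono F (Pi.single i (1:ℤ)) := by
      intro i
      set e : Fin n → ℤ := Pi.single i (1:ℤ) with he
      have hmem : (Pi.single i ((d i : ℤ)) : Fin n → ℤ) ∈ diagLattice n d := by
        intro j
        rcases eq_or_ne j i with rfl | hji
        · simp
        · simp [Pi.single_apply, hji]
      have hfix : g (mono F (Pi.single i ((d i : ℤ)))) = mono F (Pi.single i ((d i : ℤ))) := by
        apply hg
        exact Algebra.subset_adjoin ⟨_, hmem, rfl⟩
      set u : LaurentAlg F n := g (mono F e) * mono F (-e) with hu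
      have hde : (d i) • e = (Pi.single i ((d i : ℤ)) : Fin n → ℤ) := by
        ext j
        rcases eq_or_ne j i with rfl | hji
        · simp [he]
        · simp [he, Pi.single_apply, hji]
      have hupow : u ^ (d i) = 1 := by
        rw [hu, mul_pow, ← map_pow, mono_pow', mono_pow', hde, smul_neg, hde, hfix,
          mono_mul', add_neg_cancel, mono_zero']
      obtain ⟨c, hc, hcu⟩ := exists_scalar (d i) (hd i) u hupow
      refine ⟨c, hc, ?_⟩
      have hge : g (mono F e) = u * mono F e := by
        rw [hu, mul_assoc, mono_mul', neg_add_cancel, mono_zero', mul_one]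
      rw [hge, hcu]
    choose c hc1 hc2 using key
    have hc0 : ∀ i, c i ≠ 0 := by
      intro i h
      have h1 := hc1 i
      rw [h, zero_pow (Nat.one_le_iff_ne_zero.mp (hd i))] at h1
      exact zero_ne_one h1
    set ζ : Fin n → Fˣ := fun i => Units.mk0 (c i) (hc0 i) with hζ
    have hζpi : ζ ∈ Subgroup.pi Set.univ fun i => rootsOfUnity (d i) F := by
      rw [Subgroup.mem_pi]
      intro i _
      rw [mem_rootsOfUnity]
      ext
      simp [hζ, hc1 i]
    refine ⟨⟨ζ, hζpi⟩, ?_⟩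
    apply Subtype.ext
    show gEquiv ζ = g
    have halg : (gEquiv (F := F) ζ).toAlgHom = g.toAlgHom := by
      apply AddMonoidAlgebra.algHom_ext
      intro x
      have hgen : ∀ i : Fin n,
          ((Units.map ((gEquiv (F := F) ζ).toAlgHom.toRingHom.toMonoidHom)).comp monoUnitHom)
            (Multiplicative.ofAdd (Pi.single i 1))
          = ((Units.map (g.toAlgHom.toRingHom.toMonoidHom)).comp monoUnitHom)
            (Multiplicative.ofAdd (Pi.single i 1)) := by
        intro i
        apply Units.ext
        show gEquiv ζ (mono F (Pi.single i 1)) = g (mono F (Pi.single i 1))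
        rw [gEquiv_mono, prod_zpow_single, hc2 i, Algebra.smul_def]
        rfl
      have hx := monoidHom_ext_single
        ((Units.map ((gEquiv (F := F) ζ).toAlgHom.toRingHom.toMonoidHom)).comp monoUnitHom)
        ((Units.map (g.toAlgHom.toRingHom.toMonoidHom)).comp monoUnitHom) hgen x
      exact congrArg Units.val hx
      exact Subsingleton.elim _ _
    exact AlgEquiv.ext fun a => AlgHom.congr_fun halg a
  have hinj : Function.Injective (Phi (F := F) d) := by
    rw [injective_iff_map_eq_one]
    intro ζ hζ1
    have h1 : gEquiv ((ζ : Fin n → Fˣ)) = (1 : LaurentAlg F n ≃ₐ[F] LaurentAlg F n) :=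
      Subtype.ext_iff.mp hζ1
    have hz : ∀ i, ((ζ : Fin n → Fˣ) i) = 1 := by
      intro i
      have h2 : gEquiv ((ζ : Fin n → Fˣ)) (mono F (Pi.single i 1))
          = mono F (Pi.single i 1) := by rw [h1]; rfl
      rw [gEquiv_mono, prod_zpow_single] at h2
      rw [mono, AddMonoidAlgebra.smul_single', mul_one] at h2
      exact Units.ext (AddMonoidAlgebra.single_right_injective h2)
    apply Subtype.ext
    funext i
    exact hz i
  refine ⟨MulEquiv.ofBijective (Phi d) ⟨hinj, hsurj⟩, ?_⟩
  intro ζ x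
  exact gEquiv_mono _ x
end

section
/- Let P be an A-submodule of Aᵏ. Then P = (P^c_S)^e for every subgroup S of ℤⁿ (that is, for every sublattice S, P equals the extension of its contraction to A_Sᵏ) if and only if P is a constant submodule, i.e. P is generated as an A-module by vectors all of whose coordinates are scalars (elements of the image of F in A). -/
open scoped BigOperators

set_option synthInstance.maxHeartbeats 1000000
set_option maxHeartbeats 1000000

/-- `P` equals the extension of its contraction to `A_Sᵏ` for every
sublattice `S` iff `P` is a constant submodule (generated by vectors with scalar
coordinates). -/
theorem extension_of_contraction_forall_iff_constant
    {F : Type*} [Field F] {n k : ℕ} (hn : 0 < n) (hk : 1 ≤ k)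
    (P : Submodule (LaurentAlg F n) (Fin k → LaurentAlg F n)) :
    (∀ S : AddSubgroup (Fin n → ℤ),
        extendTo (monoAlg F S) (contrTo (monoAlg F S) P) = P) ↔
      ∃ T : Set (Fin k → LaurentAlg F n),
        (∀ v ∈ T, ∀ i, v i ∈ (algebraMap F (LaurentAlg F n)).range) ∧
        P = Submodule.span (LaurentAlg F n) T := by
  constructor
  · intro h
    set B := monoAlg F (⊥ : AddSubgroup (Fin n → ℤ)) with hB
    have hBle : B ≤ ⊥ := by
      apply Algebra.adjoin_le
      rintro a ⟨x, hx, rfl⟩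
      have hx0 : x = 0 := hx
      subst hx0
      rw [SetLike.mem_coe, Algebra.mem_bot]
      exact ⟨1, by simp [mono, AddMonoidAlgebra.one_def]⟩
    refine ⟨inclMap B k '' (contrTo B P : Set _), ?_, ?_⟩
    · rintro v ⟨q, hq, rfl⟩ i
      have := hBle (q i).2
      rw [Algebra.mem_bot] at this
      obtain ⟨c, hc⟩ := this
      exact ⟨c, by simpa [inclMap] using hc⟩
    · exact (h ⊥).symm
  · rintro ⟨T, hT, rfl⟩ S
    set B := monoAlg F S with hB
    apply le_antisymm
    · rw [extendTo, Submodule.span_le]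
      rintro v ⟨q, hq, rfl⟩
      exact hq
    · rw [Submodule.span_le]
      intro v hv
      choose c hc using hT v hv
      have hincl : inclMap B k (fun i => algebraMap F B (c i)) = v := by
        funext i
        simp only [inclMap, LinearMap.pi_apply, LinearMap.comp_apply,
          LinearMap.proj_apply, Algebra.linearMap_apply]
        rw [← IsScalarTower.algebraMap_apply]
        exact hc i
      have hmem : (fun i => algebraMap F B (c i)) ∈ contrTo B (Submodule.span (LaurentAlg F n) T) := by
        rw [contrTo, Submodule.mem_comap, hincl]
        exact Submodule.subset_span hv
      exact Submodule.subset_span ⟨_, hmem, hincl⟩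
end

section
/- Let d ∈ ℕⁿ, let S be a subgroup of ℤⁿ, and let S_d = L_d ∩ S, so that A_{S_d} = A_d ∩ A_S. If an A-submodule P of Aᵏ satisfies both P = (P^c_{L_d})^e (P equals the extension of its contraction to A_dᵏ) and P = (P^c_S)^e (P equals the extension of its contraction to A_Sᵏ), then P = (P^c_{S_d})^e (P equals the extension of its contraction to A_{S_d}ᵏ). -/
open scoped BigOperators

set_option synthInstance.maxHeartbeats 1000000
set_option maxHeartbeats 1000000

section Aux

variable {F : Type*} [Field F] {n : ℕ}

/-- `suppAlg S`: elements supported in `S`, as a subalgebra. -/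
noncomputable def suppAlg (S : AddSubgroup (Fin n → ℤ)) : Subalgebra F (LaurentAlg F n) where
  carrier := {a | ∀ z ∈ a.coeff.support, z ∈ S}
  mul_mem' := by
    classical
    intro a b ha hb z hz
    have := AddMonoidAlgebra.support_coeff_mul_subset a b hz
    rw [Finset.mem_add] at this
    obtain ⟨u, hu, v, hv, rfl⟩ := this
    exact S.add_mem (ha u hu) (hb v hv)
  add_mem' := by
    intro a b ha hb z hz
    have := Finsupp.support_add hz
    rw [Finset.mem_union] at this
    rcases this with h | h
    · exact ha z h
    · exact hb z h
  algebraMap_mem' := by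
    intro r z hz
    have h1 : (algebraMap F (LaurentAlg F n) r) = AddMonoidAlgebra.single 0 r := by
      simp [AddMonoidAlgebra.coe_algebraMap]
    rw [h1] at hz
    have : z ∈ ({0} : Finset (Fin n → ℤ)) := Finsupp.support_single_subset hz
    rw [Finset.mem_singleton] at this
    rw [this]; exact S.zero_mem

lemma supp_subset_of_mem_monoAlg {S : AddSubgroup (Fin n → ℤ)} {a : LaurentAlg F n}
    (ha : a ∈ monoAlg F S) : ∀ z ∈ a.coeff.support, z ∈ S := by
  have hle : monoAlg F S ≤ suppAlg (F := F) S := by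
    apply Algebra.adjoin_le
    rintro _ ⟨x, hx, rfl⟩ z hz
    have : z ∈ ({x} : Finset (Fin n → ℤ)) := Finsupp.support_single_subset hz
    rw [Finset.mem_singleton] at this
    rw [this]; exact hx
  exact hle ha

lemma mem_monoAlg_of_supp {S : AddSubgroup (Fin n → ℤ)} {a : LaurentAlg F n}
    (ha : ∀ z ∈ a.coeff.support, z ∈ S) : a ∈ monoAlg F S := by
  rw [← AddMonoidAlgebra.sum_coeff_single a]
  refine sum_mem fun z hz => ?_
  have h1 : mono F z ∈ monoAlg F S := Algebra.subset_adjoin ⟨z, ha z hz, rfl⟩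
  have h2 : AddMonoidAlgebra.single z (a.coeff z) = (a.coeff z) • mono F z := by
    rw [mono]
    rw [AddMonoidAlgebra.smul_single' (a.coeff z) z (1 : F)]
    rw [mul_one]
  rw [h2]
  exact Subalgebra.smul_mem _ h1 _

/-- The component of `a` on the coset `y + S`. -/
noncomputable def cosetFilter (S : AddSubgroup (Fin n → ℤ)) (y : Fin n → ℤ)
    (a : LaurentAlg F n) : LaurentAlg F n :=
  AddMonoidAlgebra.ofCoeff (@Finsupp.filter _ _ _ (fun z => z - y ∈ S) (fun _ => Classical.dec _) a.coeff)

lemma cosetFilter_apply_pos {S : AddSubgroup (Fin n → ℤ)} {y z : Fin n → ℤ}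
    (a : LaurentAlg F n) (h : z - y ∈ S) : (cosetFilter S y a).coeff z = a.coeff z :=
  @Finsupp.filter_apply_pos _ _ _ _ (fun _ => Classical.dec _) a.coeff z h

lemma cosetFilter_apply_neg {S : AddSubgroup (Fin n → ℤ)} {y z : Fin n → ℤ}
    (a : LaurentAlg F n) (h : ¬ (z - y ∈ S)) : (cosetFilter S y a).coeff z = 0 :=
  @Finsupp.filter_apply_neg _ _ _ _ (fun _ => Classical.dec _) a.coeff z h

lemma mem_support_cosetFilter {S : AddSubgroup (Fin n → ℤ)} {y z : Fin n → ℤ}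
    {a : LaurentAlg F n} (h : z ∈ (cosetFilter S y a).coeff.support) :
    z ∈ a.coeff.support ∧ z - y ∈ S := by
  rw [Finsupp.mem_support_iff] at h
  by_cases hzy : z - y ∈ S
  · rw [cosetFilter_apply_pos a hzy] at h
    exact ⟨Finsupp.mem_support_iff.2 h, hzy⟩
  · rw [cosetFilter_apply_neg a hzy] at h
    exact absurd rfl h

lemma cosetFilter_add {S : AddSubgroup (Fin n → ℤ)} {y : Fin n → ℤ}
    (a b : LaurentAlg F n) :
    cosetFilter S y (a + b) = cosetFilter S y a + cosetFilter S y b :=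
  congrArg AddMonoidAlgebra.ofCoeff (@Finsupp.filter_add _ _ _ _ (fun _ => Classical.dec _) a.coeff b.coeff)

lemma cosetFilter_zero {S : AddSubgroup (Fin n → ℤ)} {y : Fin n → ℤ} :
    cosetFilter S y (0 : LaurentAlg F n) = 0 :=
  congrArg AddMonoidAlgebra.ofCoeff (@Finsupp.filter_zero _ _ _ _ (fun _ => Classical.dec _))

lemma cosetFilter_single_mul {S : AddSubgroup (Fin n → ℤ)} (y x : Fin n → ℤ) (c : F)
    (b : LaurentAlg F n) :
    cosetFilter S y (AddMonoidAlgebra.single x c * b)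
      = AddMonoidAlgebra.single x c * cosetFilter S (y - x) b := by
  ext z
  have hsub : -x + z - (y - x) = z - y := by abel
  by_cases h : z - y ∈ S
  · rw [cosetFilter_apply_pos _ h, AddMonoidAlgebra.coeff_single_mul_apply,
      AddMonoidAlgebra.coeff_single_mul_apply, cosetFilter_apply_pos]
    rw [hsub]; exact h
  · rw [cosetFilter_apply_neg _ h, AddMonoidAlgebra.coeff_single_mul_apply,
      cosetFilter_apply_neg, mul_zero]
    rw [hsub]; exact h

end Aux

section Aux2

variable {F : Type*} [Field F] {n k : ℕ}

lemma inclMap_apply (B : Subalgebra F (LaurentAlg F n)) (q : Fin k → B) (i : Fin k) :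
    inclMap B k q i = (q i : LaurentAlg F n) := rfl

lemma extendTo_contrTo_le (B : Subalgebra F (LaurentAlg F n))
    (P : Submodule (LaurentAlg F n) (Fin k → LaurentAlg F n)) :
    extendTo B (contrTo B P) ≤ P := by
  rw [extendTo, Submodule.span_le]
  rintro x ⟨q, hq, rfl⟩
  exact hq

noncomputable def cosetFilterHom (S : AddSubgroup (Fin n → ℤ)) (y : Fin n → ℤ) :
    LaurentAlg F n →+ LaurentAlg F n where
  toFun := cosetFilter S y
  map_zero' := cosetFilter_zero
  map_add' := cosetFilter_add

/-- the component of `p` on the coset `y + S` belongs to `P` whenever `P` is extended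
from `A_S`. -/
lemma component_mem (S : AddSubgroup (Fin n → ℤ))
    (P : Submodule (LaurentAlg F n) (Fin k → LaurentAlg F n))
    (hS : extendTo (monoAlg F S) (contrTo (monoAlg F S) P) = P)
    {p : Fin k → LaurentAlg F n} (hp : p ∈ P) (y : Fin n → ℤ) :
    (fun i => cosetFilter S y (p i)) ∈ P := by
  rw [← hS] at hp
  rw [extendTo] at hp
  refine Submodule.span_induction
    (p := fun x _ => ∀ y : Fin n → ℤ, (fun i => cosetFilter S y (x i)) ∈ P)
    ?_ ?_ ?_ ?_ hp y
  · rintro _ ⟨q, hq, rfl⟩ y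
    have hqP : inclMap (monoAlg F S) k q ∈ P := hq
    by_cases hy : y ∈ S
    · have : (fun i => cosetFilter S y (inclMap (monoAlg F S) k q i))
          = inclMap (monoAlg F S) k q := by
        funext i; ext z
        by_cases hz : (inclMap (monoAlg F S) k q i).coeff z = 0
        · by_cases h : z - y ∈ S
          · rw [cosetFilter_apply_pos _ h]
          · rw [cosetFilter_apply_neg _ h, hz]
        · have hzS : z ∈ S := supp_subset_of_mem_monoAlg (q i).2 z
            (Finsupp.mem_support_iff.2 hz)
          exact cosetFilter_apply_pos _ (S.sub_mem hzS hy)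
      rw [this]; exact hqP
    · have : (fun i => cosetFilter S y (inclMap (monoAlg F S) k q i))
          = (0 : Fin k → LaurentAlg F n) := by
        funext i; ext z
        by_cases h : z - y ∈ S
        · rw [cosetFilter_apply_pos _ h]
          by_contra hz
          have hzS : z ∈ S := supp_subset_of_mem_monoAlg (q i).2 z
            (Finsupp.mem_support_iff.2 (by simpa [inclMap_apply] using hz))
          have : y ∈ S := by
            have := S.sub_mem hzS h
            simpa using this
          exact hy this
        · rw [cosetFilter_apply_neg _ h]; rfl
      rw [this]; exact P.zero_mem
  · intro y
    have : (fun i => cosetFilter S y ((0 : Fin k → LaurentAlg F n) i)) = 0 := by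
      funext i; exact cosetFilter_zero
    rw [this]; exact P.zero_mem
  · intro x₁ x₂ _ _ h1 h2 y
    have : (fun i => cosetFilter S y ((x₁ + x₂) i))
        = (fun i => cosetFilter S y (x₁ i)) + (fun i => cosetFilter S y (x₂ i)) := by
      funext i; exact cosetFilter_add _ _
    rw [this]; exact P.add_mem (h1 y) (h2 y)
  · intro a x _ hx y
    classical
    have h1 : (fun i => cosetFilter S y ((a • x) i))
        = a.coeff.sum (fun z c => (AddMonoidAlgebra.single z c : LaurentAlg F n) •
            (fun i => cosetFilter S (y - z) (x i))) := by
      funext i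
      have hax : (a • x) i = a * x i := rfl
      rw [hax]
      conv_lhs => rw [← AddMonoidAlgebra.sum_coeff_single a]
      rw [Finsupp.sum, Finset.sum_mul,
        show cosetFilter S y = cosetFilterHom (F := F) S y from rfl,
        map_sum, Finsupp.sum, Finset.sum_apply]
      refine Finset.sum_congr rfl fun z hz => ?_
      show cosetFilter S y (AddMonoidAlgebra.single z (a.coeff z) * x i) = _
      rw [cosetFilter_single_mul]
      rfl
    rw [h1, Finsupp.sum]
    exact sum_mem fun z hz => P.smul_mem _ (hx (y - z))

end Aux2

section Main

variable {F : Type*} [Field F] {n k : ℕ}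

lemma mem_extend_inter (d : Fin n → ℕ) (S : AddSubgroup (Fin n → ℤ))
    (P : Submodule (LaurentAlg F n) (Fin k → LaurentAlg F n))
    (hS : extendTo (monoAlg F S) (contrTo (monoAlg F S) P) = P) :
    ∀ N : ℕ, ∀ p : Fin k → LaurentAlg F n, p ∈ P →
      (∀ i, ∀ z ∈ (p i).coeff.support, z ∈ diagLattice n d) →
      (Finset.univ.sup fun i => (p i).coeff.support).card ≤ N →
      p ∈ extendTo (monoAlg F (diagLattice n d ⊓ S))
        (contrTo (monoAlg F (diagLattice n d ⊓ S)) P) := by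
  classical
  intro N
  induction N with
  | zero =>
    intro p hp hsupp hcard
    have hT : (Finset.univ.sup fun i => (p i).coeff.support) = ∅ :=
      Finset.card_eq_zero.1 (Nat.le_zero.1 hcard)
    have : p = 0 := by
      funext i
      refine AddMonoidAlgebra.coeff_eq_zero.1 (Finsupp.support_eq_empty.1 (Finset.eq_empty_of_forall_notMem fun z hz => ?_))
      have hzT : z ∈ (Finset.univ.sup fun i => (p i).coeff.support) :=
        Finset.mem_sup.2 ⟨i, Finset.mem_univ i, hz⟩
      rw [hT] at hzT
      exact absurd hzT (Finset.notMem_empty z)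
    rw [this]; exact Submodule.zero_mem _
  | succ N ih =>
    intro p hp hsupp hcard
    set T := (Finset.univ.sup fun i => (p i).coeff.support) with hTdef
    by_cases hT : T = ∅
    · have : p = 0 := by
        funext i
        refine AddMonoidAlgebra.coeff_eq_zero.1 (Finsupp.support_eq_empty.1 (Finset.eq_empty_of_forall_notMem fun z hz => ?_))
        have hzT : z ∈ T := Finset.mem_sup.2 ⟨i, Finset.mem_univ i, hz⟩
        rw [hT] at hzT
        exact absurd hzT (Finset.notMem_empty z)
      rw [this]; exact Submodule.zero_mem _
    · obtain ⟨y, hyT⟩ := Finset.nonempty_of_ne_empty hT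
      obtain ⟨i₀, -, hyi₀⟩ := Finset.mem_sup.1 hyT
      have hyd : y ∈ diagLattice n d := hsupp i₀ y hyi₀
      set q : Fin k → LaurentAlg F n := fun i => cosetFilter S y (p i) with hqdef
      have hqP : q ∈ P := component_mem S P hS hp y
      -- the shifted element and its membership in the contraction
      set r : Fin k → LaurentAlg F n := mono F (-y) • q with hrdef
      have hrP : r ∈ P := P.smul_mem _ hqP
      have hrsupp : ∀ i, ∀ z ∈ (r i).coeff.support, z ∈ diagLattice n d ⊓ S := by
        intro i z hz
        have hri : r i = AddMonoidAlgebra.single (-y) (1 : F) * q i := rfl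
        have hz' : (r i).coeff z ≠ 0 := Finsupp.mem_support_iff.1 hz
        rw [hri, AddMonoidAlgebra.coeff_single_mul_apply, one_mul] at hz'
        have hmem : (y + z) ∈ (q i).coeff.support := by
          rw [Finsupp.mem_support_iff]
          simpa using hz'
        obtain ⟨hmp, hms⟩ := mem_support_cosetFilter hmem
        have hpd : y + z ∈ diagLattice n d := hsupp i _ hmp
        have hz1 : z ∈ diagLattice n d := by
          have := (diagLattice n d).sub_mem hpd hyd
          simpa using this
        have hz2 : z ∈ S := by simpa using hms
        exact AddSubgroup.mem_inf.2 ⟨hz1, hz2⟩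
      set B := monoAlg F (diagLattice n d ⊓ S) with hBdef
      have hrB : ∀ i, r i ∈ B := fun i => mem_monoAlg_of_supp (hrsupp i)
      set r' : Fin k → B := fun i => ⟨r i, hrB i⟩ with hr'def
      have hr'incl : inclMap B k r' = r := by
        funext i; rfl
      have hr'mem : r' ∈ contrTo B P := by
        show inclMap B k r' ∈ Submodule.restrictScalars B P
        rw [hr'incl]; exact hrP
      have hqE : q ∈ extendTo B (contrTo B P) := by
        have hq_eq : q = mono F y • inclMap B k r' := by
          rw [hr'incl, hrdef]
          funext i
          show q i = AddMonoidAlgebra.single y (1 : F) *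
            (AddMonoidAlgebra.single (-y) (1 : F) * q i)
          rw [← mul_assoc, AddMonoidAlgebra.single_mul_single, add_neg_cancel, one_mul,
            ← AddMonoidAlgebra.one_def, one_mul]
        rw [hq_eq]
        exact Submodule.smul_mem _ _ (Submodule.subset_span ⟨r', hr'mem, rfl⟩)
      -- the remainder p - q
      have hpq : p - q ∈ P := P.sub_mem hp hqP
      have hpq_supp : ∀ i, ((p - q) i).coeff.support ⊆ (p i).coeff.support := by
        intro i z hz
        have hz' : ((p - q) i).coeff z ≠ 0 := Finsupp.mem_support_iff.1 hz
        rw [Finsupp.mem_support_iff]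
        intro h0
        apply hz'
        have hq0 : (q i).coeff z = 0 := by
          by_cases h : z - y ∈ S
          · rw [hqdef]; rw [cosetFilter_apply_pos _ h]; exact h0
          · rw [hqdef]; exact cosetFilter_apply_neg _ h
        show (p i - q i).coeff z = 0
        rw [AddMonoidAlgebra.coeff_sub, Finsupp.sub_apply, h0, hq0, sub_zero]
      have hpq_d : ∀ i, ∀ z ∈ ((p - q) i).coeff.support, z ∈ diagLattice n d :=
        fun i z hz => hsupp i z (hpq_supp i hz)
      have hpq_ney : ∀ i, y ∉ ((p - q) i).coeff.support := by
        intro i hy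
        have hz' : ((p - q) i).coeff y ≠ 0 := Finsupp.mem_support_iff.1 hy
        apply hz'
        have hq0 : (q i).coeff y = (p i).coeff y := by
          rw [hqdef]
          exact cosetFilter_apply_pos _ (by simpa using S.zero_mem)
        show (p i - q i).coeff y = 0
        rw [AddMonoidAlgebra.coeff_sub, Finsupp.sub_apply, hq0, sub_self]
      have hcard' : (Finset.univ.sup fun i => ((p - q) i).coeff.support).card ≤ N := by
        have hsub : (Finset.univ.sup fun i => ((p - q) i).coeff.support) ⊆ T.erase y := by
          intro z hz
          obtain ⟨i, -, hzi⟩ := Finset.mem_sup.1 hz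
          refine Finset.mem_erase.2 ⟨?_, ?_⟩
          · rintro rfl; exact hpq_ney i hzi
          · exact Finset.mem_sup.2 ⟨i, Finset.mem_univ i, hpq_supp i hzi⟩
        calc (Finset.univ.sup fun i => ((p - q) i).coeff.support).card
            ≤ (T.erase y).card := Finset.card_le_card hsub
          _ = T.card - 1 := Finset.card_erase_of_mem hyT
          _ ≤ N := by omega
      have hpqE := ih (p - q) hpq hpq_d hcard'
      have : p = (p - q) + q := by rw [sub_add_cancel]
      rw [this]
      exact Submodule.add_mem _ hpqE hqE

end Main

/-- If `P` is the extension of its contraction both to `A_dᵏ` and to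
`A_Sᵏ`, then it is the extension of its contraction to `A_{S_d}ᵏ`, where
`S_d = L_d ∩ S`. -/
theorem extension_of_contraction_to_intersection
    {F : Type*} [Field F] {n k : ℕ} (hn : 0 < n) (hk : 1 ≤ k)
    (d : Fin n → ℕ) (S : AddSubgroup (Fin n → ℤ))
    (P : Submodule (LaurentAlg F n) (Fin k → LaurentAlg F n))
    (hd : extendTo (monoAlg F (diagLattice n d)) (contrTo (monoAlg F (diagLattice n d)) P) = P)
    (hS : extendTo (monoAlg F S) (contrTo (monoAlg F S) P) = P) :
    extendTo (monoAlg F (diagLattice n d ⊓ S))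
      (contrTo (monoAlg F (diagLattice n d ⊓ S)) P) = P := by
  refine le_antisymm (extendTo_contrTo_le _ _) ?_
  conv_lhs => rw [← hd]
  rw [extendTo, Submodule.span_le]
  rintro x ⟨q, hq, rfl⟩
  have hqP : inclMap (monoAlg F (diagLattice n d)) k q ∈ P := hq
  refine mem_extend_inter d S P hS
    (Finset.univ.sup fun i => ((inclMap (monoAlg F (diagLattice n d)) k q) i).coeff.support).card
    _ hqP ?_ le_rfl
  intro i z hz
  exact supp_subset_of_mem_monoAlg (q i).2 z hz
end
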